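/- arXiv:1904.09825 — 8 statements merged into one kernel-verified Lean document; each statement's English description precedes it below -/
import Mathlib

section
/- For every real numbers a, b ≥ 0 and every p > 1, |a^p − b^p| ≤ c_p · |a − b| · (a^(p−1) + b^(p−1)), where c_p := max(p/2, 1). -/
/-! Assume `b ≤ a`. Expanding the right-hand side, the bound with constant `1` amounts to
`b * a ^ (p - 1) ≤ a * b ^ (p - 1)`, which holds when `p ≤ 2`. For `p ≥ 2` the bound with
constant `p / 2` is the trapezoid rule for `∫ p x^(p-1)` over `[b, a]`, valid because the
integrand is convex: the difference of the two sides vanishes at `a = b` and is nondecreasing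
in `a` by the tangent-line inequality for `x ^ (p - 1)`. -/

open Real Set

lemma rpow_sub_rpow_le_mul_rpow_sub_one {a b q : ℝ} (hq : 1 ≤ q) (hb : 0 ≤ b) (hba : b ≤ a) :
    a ^ q - b ^ q ≤ q * a ^ (q - 1) * (a - b) := by
  rcases hba.eq_or_lt with rfl | hba
  · simp
  have hslope := (convexOn_rpow hq).slope_le_of_hasDerivAt (mem_Ici.2 hb)
    (mem_Ici.2 (hb.trans hba.le)) hba (hasDerivAt_rpow_const (Or.inr hq))
  rwa [slope_def_field, div_le_iff₀ (sub_pos.2 hba)] at hslope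

lemma mul_rpow_le_mul_rpow {a b r : ℝ} (hr : r ≤ 1) (hb : 0 ≤ b) (hba : b ≤ a) :
    b * a ^ r ≤ a * b ^ r := by
  have hsplit : ∀ x : ℝ, 0 ≤ x → x = x ^ (1 - r) * x ^ r := fun x hx => by
    rw [← rpow_add' hx (by norm_num), sub_add_cancel, rpow_one]
  calc b * a ^ r = b ^ (1 - r) * (b ^ r * a ^ r) := by
        conv_lhs => rw [hsplit b hb]
        ring
    _ ≤ a ^ (1 - r) * (b ^ r * a ^ r) := by
      gcongr
      exact mul_nonneg (rpow_nonneg hb r) (rpow_nonneg (hb.trans hba) r)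
    _ = a * b ^ r := by
        conv_rhs => rw [hsplit a (hb.trans hba)]
        ring

lemma rpow_eq_mul_rpow_sub_one {x p : ℝ} (hx : 0 ≤ x) (hp : p ≠ 0) : x ^ p = x * x ^ (p - 1) := by
  rw [← rpow_one_add' hx (by simpa using hp), add_sub_cancel]

lemma rpow_sub_rpow_le_of_le_two {a b p : ℝ} (hp₀ : 0 < p) (hp₂ : p ≤ 2) (hb : 0 ≤ b)
    (hba : b ≤ a) : a ^ p - b ^ p ≤ (a - b) * (a ^ (p - 1) + b ^ (p - 1)) := by
  have hcross := mul_rpow_le_mul_rpow (r := p - 1) (by linarith) hb hba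
  rw [rpow_eq_mul_rpow_sub_one (hb.trans hba) hp₀.ne', rpow_eq_mul_rpow_sub_one hb hp₀.ne']
  nlinarith

lemma rpow_sub_rpow_le_of_two_le {a b p : ℝ} (hp : 2 ≤ p) (hb : 0 ≤ b) (hba : b ≤ a) :
    a ^ p - b ^ p ≤ p / 2 * (a - b) * (a ^ (p - 1) + b ^ (p - 1)) := by
  set f : ℝ → ℝ := fun x => p / 2 * (x - b) * (x ^ (p - 1) + b ^ (p - 1)) - (x ^ p - b ^ p)
  set f' : ℝ → ℝ := fun x => p / 2 * (x ^ (p - 1) + b ^ (p - 1))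
    + p / 2 * (x - b) * ((p - 1) * x ^ (p - 1 - 1)) - p * x ^ (p - 1)
  have hderiv : ∀ x, HasDerivAt f (f' x) x := fun x => by
    have hx₁ := hasDerivAt_rpow_const (x := x) (p := p - 1) (Or.inr (by linarith))
    have hx := hasDerivAt_rpow_const (x := x) (p := p) (Or.inr (by linarith))
    exact ((((hasDerivAt_id x).sub_const b).const_mul (p / 2)).mul
      (hx₁.add_const (b ^ (p - 1)))).sub (hx.sub_const (b ^ p))
      |>.congr_deriv (by simp only [f', id]; ring)
  have hf'_nonneg : ∀ x ∈ interior (Ici b), 0 ≤ f' x := fun x hx => by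
    rw [interior_Ici] at hx
    have htangent := rpow_sub_rpow_le_mul_rpow_sub_one (q := p - 1) (by linarith) hb (le_of_lt hx)
    simp only [f']
    nlinarith
  have hmono : MonotoneOn f (Ici b) :=
    monotoneOn_of_hasDerivWithinAt_nonneg (convex_Ici b)
      (fun x _ => (hderiv x).continuousAt.continuousWithinAt)
      (fun x _ => (hderiv x).hasDerivWithinAt) hf'_nonneg
  have hfa := hmono self_mem_Ici hba hba
  simp only [f, sub_self, zero_mul, mul_zero] at hfa
  linarith

lemma rpow_sub_rpow_le_max_mul {a b p : ℝ} (hp : 0 < p) (hb : 0 ≤ b) (hba : b ≤ a) :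
    a ^ p - b ^ p ≤ max (p / 2) 1 * (a - b) * (a ^ (p - 1) + b ^ (p - 1)) := by
  rcases le_total p 2 with hp₂ | hp₂
  · rw [max_eq_right (by linarith), one_mul]
    exact rpow_sub_rpow_le_of_le_two hp hp₂ hb hba
  · rw [max_eq_left (by linarith)]
    exact rpow_sub_rpow_le_of_two_le hp₂ hb hba

theorem abs_rpow_sub_rpow_le (a b p : ℝ) (ha : 0 ≤ a) (hb : 0 ≤ b) (hp : 1 < p) :
    |a ^ p - b ^ p| ≤ max (p / 2) 1 * |a - b| * (a ^ (p - 1) + b ^ (p - 1)) := by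
  wlog hba : b ≤ a generalizing a b
  · rw [abs_sub_comm, abs_sub_comm a, add_comm]
    exact this b a hb ha (le_of_not_ge hba)
  have hp₀ : 0 < p := by linarith
  rw [abs_of_nonneg (sub_nonneg.2 (rpow_le_rpow hb hba hp₀.le)), abs_of_nonneg (sub_nonneg.2 hba)]
  exact rpow_sub_rpow_le_max_mul hp₀ hb hba
end

section
/- Let p > 1 with conjugate exponent q (1/p + 1/q = 1), and let μ₀, μ₁ be finite nonnegative measures on a measurable space Ω with densities ρ₀, ρ₁ with respect to a common dominating measure λ. Then ∫ |ρ₀ − ρ₁| dλ ≤ c_p · (μ₀(Ω)^(1/q) + μ₁(Ω)^(1/q)) · (∫ |ρ₀^(1/p) − ρ₁^(1/p)|^p dλ)^(1/p), where c_p = max(p/2, 1). -/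
/-!
With `x = a^(1/p)` and `y = b^(1/p)` one has pointwise
`|a - b| = |x^p - y^p| ≤ c_p (x^(p-1) + y^(p-1)) |x - y|`
`        = c_p (a^(1/q) + b^(1/q)) |a^(1/p) - b^(1/p)|`.
For `p ≥ 2` this is the trapezoid bound for the integral of the convex function `t^(p-1)` over
`[y, x]`; for `p ≤ 2` it reduces to `x^(p-1) y ≤ x y^(p-1)`, i.e. to `t^(p-2)` being antitone.
Integrating against `λ` and applying Hölder to each of the two products gives the claim, since
`∫ (ρᵢ^(1/q))^q dλ = μᵢ(Ω)`.
-/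

open MeasureTheory ENNReal NNReal Set

theorem ConvexOn.intervalIntegral_le_trapezoid {f : ℝ → ℝ} {a b : ℝ} (hab : a ≤ b)
    (hf : ConvexOn ℝ (Icc a b) f) (hfi : IntervalIntegrable f volume a b) :
    ∫ t in a..b, f t ≤ (b - a) * ((f a + f b) / 2) := by
  rcases hab.eq_or_lt with rfl | hab
  · simp
  have hchord : ∀ t ∈ Ioo a b, f t ≤ ((b - t) * f a + (t - a) * f b) / (b - a) := fun t ht => by
    rw [le_div_iff₀ (sub_pos.2 hab), mul_comm]
    exact hf.secant_mono_aux1 (left_mem_Icc.2 hab.le) (right_mem_Icc.2 hab.le) ht.1 ht.2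
  calc ∫ t in a..b, f t ≤ ∫ t in a..b, ((b - t) * f a + (t - a) * f b) / (b - a) :=
        intervalIntegral.integral_mono_on_of_le_Ioo hab.le hfi
          (Continuous.intervalIntegrable (by fun_prop) _ _) hchord
    _ = (b - a) * ((f a + f b) / 2) := by
      rw [intervalIntegral.integral_div, intervalIntegral.integral_add
        (Continuous.intervalIntegrable (by fun_prop) _ _)
        (Continuous.intervalIntegrable (by fun_prop) _ _)]
      simp only [intervalIntegral.integral_mul_const,
        intervalIntegral.integral_comp_sub_left fun t => t,
        intervalIntegral.integral_comp_sub_right fun t => t, integral_id]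
      field_simp
      ring

namespace Real

theorem rpow_sub_rpow_le_of_le_two {p x y : ℝ} (hp : p ≤ 2) (hy : 0 ≤ y) (hyx : y ≤ x) :
    x ^ p - y ^ p ≤ (x ^ (p - 1) + y ^ (p - 1)) * (x - y) := by
  rcases (hy.trans hyx).eq_or_lt with hx | hx
  · obtain rfl : y = 0 := le_antisymm (hx ▸ hyx) hy
    simp [← hx]
  have hcross : x ^ (p - 1) * y ≤ x * y ^ (p - 1) := by
    rcases hy.eq_or_lt with rfl | hy
    · simpa using mul_nonneg hx.le (rpow_nonneg le_rfl (p - 1))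
    have h := rpow_le_rpow_of_nonpos hy hyx (by linarith : p - 2 ≤ 0)
    have hx' : x ^ (p - 1) = x ^ (p - 2) * x := by
      rw [← rpow_add_one hx.ne']; ring_nf
    have hy' : y ^ (p - 1) = y ^ (p - 2) * y := by
      rw [← rpow_add_one hy.ne']; ring_nf
    rw [hx', hy']
    nlinarith [mul_le_mul_of_nonneg_left h (mul_nonneg hx.le hy.le)]
  have hxp : x ^ p = x ^ (p - 1) * x := by rw [← rpow_add_one hx.ne', sub_add_cancel]
  have hyp : y ^ (p - 1) * y ≤ y ^ p := by
    rcases hy.eq_or_lt with rfl | hy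
    · simpa using rpow_nonneg le_rfl p
    · rw [← rpow_add_one hy.ne', sub_add_cancel]
  nlinarith

theorem rpow_sub_rpow_le_of_two_le {p x y : ℝ} (hp : 2 ≤ p) (hy : 0 ≤ y) (hyx : y ≤ x) :
    x ^ p - y ^ p ≤ p / 2 * ((x ^ (p - 1) + y ^ (p - 1)) * (x - y)) := by
  have hconv : ConvexOn ℝ (Icc y x) fun t : ℝ => t ^ (p - 1) :=
    (convexOn_rpow (by linarith)).subset (fun t ht => le_trans hy ht.1) (convex_Icc y x)
  have h := hconv.intervalIntegral_le_trapezoid hyx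
    (intervalIntegral.intervalIntegrable_rpow (Or.inl (by linarith)))
  rw [integral_rpow (Or.inl (by linarith)), sub_add_cancel] at h
  rw [div_le_iff₀ (by linarith)] at h
  linarith

theorem rpow_sub_rpow_le_max (p : ℝ) {x y : ℝ} (hy : 0 ≤ y) (hyx : y ≤ x) :
    x ^ p - y ^ p ≤ max (p / 2) 1 * ((x ^ (p - 1) + y ^ (p - 1)) * (x - y)) := by
  have hx := hy.trans hyx
  have hnonneg : 0 ≤ (x ^ (p - 1) + y ^ (p - 1)) * (x - y) :=
    mul_nonneg (by positivity) (sub_nonneg.2 hyx)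
  rcases le_total p 2 with hp | hp
  · exact (rpow_sub_rpow_le_of_le_two hp hy hyx).trans
      (le_mul_of_one_le_left hnonneg (le_max_right _ _))
  · exact (rpow_sub_rpow_le_of_two_le hp hy hyx).trans
      (mul_le_mul_of_nonneg_right (le_max_left _ _) hnonneg)

end Real

theorem ENNReal.rpow_sub_rpow_le_max {p : ℝ} (hp : 1 ≤ p) {u v : ℝ≥0∞} (hvu : v ≤ u) :
    u ^ p - v ^ p ≤ ENNReal.ofReal (max (p / 2) 1) * ((u ^ (p - 1) + v ^ (p - 1)) * (u - v)) := by
  have hp1 : 0 ≤ p - 1 := sub_nonneg.2 hp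
  rcases eq_top_or_lt_top u with rfl | hu
  · rcases eq_top_or_lt_top v with rfl | hv
    · simp
    have htop : (⊤ : ℝ≥0∞) ^ (p - 1) ≠ 0 := by simp [ENNReal.rpow_eq_zero_iff, hp]
    simp [ENNReal.sub_eq_top_iff.2 ⟨rfl, hv.ne⟩, htop, ENNReal.mul_top]
  lift u to ℝ≥0 using hu.ne
  lift v to ℝ≥0 using (hvu.trans_lt hu).ne
  rw [ENNReal.coe_le_coe] at hvu
  rw [← coe_rpow_of_nonneg _ (by linarith), ← coe_rpow_of_nonneg _ (by linarith),
    ← coe_rpow_of_nonneg _ hp1, ← coe_rpow_of_nonneg _ hp1, ← ENNReal.coe_sub, ← ENNReal.coe_sub,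
    ← ENNReal.coe_add, ENNReal.ofReal, ← ENNReal.coe_mul, ← ENNReal.coe_mul, ENNReal.coe_le_coe,
    ← NNReal.coe_le_coe]
  push_cast [NNReal.coe_sub hvu, NNReal.coe_sub (NNReal.rpow_le_rpow hvu (by linarith)),
    Real.coe_toNNReal _ (zero_le_one.trans (le_max_right _ _))]
  exact Real.rpow_sub_rpow_le_max p v.coe_nonneg hvu

theorem ENNReal.sub_sup_sub_le_of_holderConjugate {p q : ℝ} (hpq : p.HolderConjugate q)
    (a b : ℝ≥0∞) :
    (a - b) ⊔ (b - a) ≤ ENNReal.ofReal (max (p / 2) 1) *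
      ((a ^ (1 / q) + b ^ (1 / q)) *
        ((a ^ (1 / p) - b ^ (1 / p)) ⊔ (b ^ (1 / p) - a ^ (1 / p)))) := by
  wlog hba : b ≤ a generalizing a b
  · simpa only [sup_comm, add_comm] using this b a (le_of_not_ge hba)
  have hpow_p : ∀ c : ℝ≥0∞, (c ^ (1 / p)) ^ p = c := fun c => by
    rw [← ENNReal.rpow_mul, one_div_mul_cancel hpq.ne_zero, ENNReal.rpow_one]
  have hpow_q : ∀ c : ℝ≥0∞, (c ^ (1 / p)) ^ (p - 1) = c ^ (1 / q) := fun c => by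
    rw [← ENNReal.rpow_mul, one_div, one_div, ← hpq.one_sub_inv, mul_sub_one,
      inv_mul_cancel₀ hpq.ne_zero]
  have h := ENNReal.rpow_sub_rpow_le_max hpq.lt.le
    (ENNReal.rpow_le_rpow (z := 1 / p) hba hpq.one_div_nonneg)
  rw [hpow_p, hpow_p, hpow_q, hpow_q] at h
  rw [tsub_eq_zero_of_le hba, sup_of_le_left zero_le]
  exact h.trans (by gcongr; exact le_sup_left)

theorem ENNReal.lintegral_rpow_mul_le_of_holderConjugate {α : Type*} [MeasurableSpace α]
    (μ : Measure α) {p q : ℝ} (hpq : p.HolderConjugate q) {f g : α → ℝ≥0∞}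
    (hf : AEMeasurable f μ) (hg : AEMeasurable g μ) :
    ∫⁻ x, f x ^ (1 / q) * g x ∂μ ≤ (∫⁻ x, f x ∂μ) ^ (1 / q) * (∫⁻ x, g x ^ p ∂μ) ^ (1 / p) := by
  have h := ENNReal.lintegral_mul_le_Lp_mul_Lq μ hpq.symm (hf.pow_const (1 / q)) hg
  simp_rw [← ENNReal.rpow_mul, one_div_mul_cancel hpq.symm.pos.ne', ENNReal.rpow_one] at h
  exact h

theorem totalVariation_le_hellinger_general {Ω : Type*} [MeasurableSpace Ω]
    (lam : Measure Ω)
    (ρ₀ ρ₁ : Ω → ℝ≥0∞) (hρ₀ : Measurable ρ₀) (hρ₁ : Measurable ρ₁)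
    (μ₀ μ₁ : Measure Ω)
    (h₀ : μ₀ = lam.withDensity ρ₀) (h₁ : μ₁ = lam.withDensity ρ₁)
    (p q : ℝ) (hp : 1 < p) (hq : 1 / p + 1 / q = 1) :
    ∫⁻ x, ((ρ₀ x - ρ₁ x) ⊔ (ρ₁ x - ρ₀ x)) ∂lam ≤
      ENNReal.ofReal (max (p / 2) 1) *
        ((μ₀ Set.univ) ^ (1 / q) + (μ₁ Set.univ) ^ (1 / q)) *
        (∫⁻ x, ((ρ₀ x ^ (1 / p) - ρ₁ x ^ (1 / p)) ⊔ (ρ₁ x ^ (1 / p) - ρ₀ x ^ (1 / p))) ^ p ∂lam)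
          ^ (1 / p) := by
  have hpq : p.HolderConjugate q :=
    Real.holderConjugate_iff.2 ⟨hp, by simpa only [one_div] using hq⟩
  set c := ENNReal.ofReal (max (p / 2) 1)
  set D : Ω → ℝ≥0∞ := fun x =>
    (ρ₀ x ^ (1 / p) - ρ₁ x ^ (1 / p)) ⊔ (ρ₁ x ^ (1 / p) - ρ₀ x ^ (1 / p))
  have hD : Measurable D := by fun_prop
  have hμ : ∀ ρ : Ω → ℝ≥0∞, lam.withDensity ρ univ = ∫⁻ x, ρ x ∂lam := fun ρ => by
    rw [withDensity_apply _ MeasurableSet.univ, Measure.restrict_univ]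
  calc ∫⁻ x, ((ρ₀ x - ρ₁ x) ⊔ (ρ₁ x - ρ₀ x)) ∂lam
      ≤ ∫⁻ x, c * (ρ₀ x ^ (1 / q) * D x + ρ₁ x ^ (1 / q) * D x) ∂lam := lintegral_mono fun x => by
        rw [← add_mul]; exact ENNReal.sub_sup_sub_le_of_holderConjugate hpq (ρ₀ x) (ρ₁ x)
    _ = c * (∫⁻ x, ρ₀ x ^ (1 / q) * D x ∂lam + ∫⁻ x, ρ₁ x ^ (1 / q) * D x ∂lam) := by
      rw [lintegral_const_mul' _ _ ofReal_ne_top, lintegral_add_left (by fun_prop)]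
    _ ≤ c * ((∫⁻ x, ρ₀ x ∂lam) ^ (1 / q) * (∫⁻ x, D x ^ p ∂lam) ^ (1 / p) +
          (∫⁻ x, ρ₁ x ∂lam) ^ (1 / q) * (∫⁻ x, D x ^ p ∂lam) ^ (1 / p)) := by
      gcongr <;> exact ENNReal.lintegral_rpow_mul_le_of_holderConjugate lam hpq
        (by fun_prop) hD.aemeasurable
    _ = _ := by rw [h₀, h₁, hμ, hμ]; ring

/-- Total variation is controlled by the `p`-Hellinger distance:
`He₁(μ₀,μ₁) ≤ c_p (μ₀(Ω)^{1/q} + μ₁(Ω)^{1/q}) · He_p(μ₀,μ₁)` with `c_p = max(p/2,1)`. -/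
theorem totalVariation_le_hellinger {Ω : Type*} [MeasurableSpace Ω]
    (lam : Measure Ω) [SigmaFinite lam]
    (ρ₀ ρ₁ : Ω → ℝ≥0∞) (hρ₀ : Measurable ρ₀) (hρ₁ : Measurable ρ₁)
    (μ₀ μ₁ : Measure Ω) [IsFiniteMeasure μ₀] [IsFiniteMeasure μ₁]
    (h₀ : μ₀ = lam.withDensity ρ₀) (h₁ : μ₁ = lam.withDensity ρ₁)
    (p q : ℝ) (hp : 1 < p) (hq : 1 / p + 1 / q = 1) :
    ∫⁻ x, ((ρ₀ x - ρ₁ x) ⊔ (ρ₁ x - ρ₀ x)) ∂lam ≤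
      ENNReal.ofReal (max (p / 2) 1) *
        ((μ₀ Set.univ) ^ (1 / q) + (μ₁ Set.univ) ^ (1 / q)) *
        (∫⁻ x, ((ρ₀ x ^ (1 / p) - ρ₁ x ^ (1 / p)) ⊔ (ρ₁ x ^ (1 / p) - ρ₀ x ^ (1 / p))) ^ p ∂lam)
          ^ (1 / p) :=
  totalVariation_le_hellinger_general lam ρ₀ ρ₁ hρ₀ hρ₁ μ₀ μ₁ h₀ h₁ p q hp hq
end

section
/- For all nonnegative reals r₀, r₁, the minimum over r ≥ 0 of H_KL(r, r₀) + H_KL(r, r₁) equals (√r₀ − √r₁)², and is attained at r = √(r₀ r₁). Here H_KL(r,s) = r(ln r − ln s) + s − r if r,s > 0, H_KL(0,s) = s, and H_KL(r,0) = +∞ for r > 0. -/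
open scoped ENNReal

noncomputable def HKL (r s : ℝ) : ℝ≥0∞ :=
  if r = 0 then ENNReal.ofReal s
  else if s = 0 then ⊤
  else ENNReal.ofReal (r * (Real.log r - Real.log s) + s - r)

lemma key_nonneg (r s : ℝ) (hr : 0 < r) (hs : 0 < s) :
    0 ≤ r * (Real.log r - Real.log s) + s - r := by
  have h := Real.log_le_sub_one_of_pos (div_pos hs hr)
  rw [Real.log_div hs.ne' hr.ne'] at h
  have h2 : (Real.log s - Real.log r) * r ≤ (s / r - 1) * r :=
    mul_le_mul_of_nonneg_right h hr.le
  have h3 : s / r * r = s := div_mul_cancel₀ s hr.ne'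
  nlinarith

/-- `min_{r ≥ 0} H_KL(r,r₀) + H_KL(r,r₁) = (√r₀ − √r₁)²`, attained at `r = √(r₀ r₁)`. -/
theorem min_HKL_sum (r₀ r₁ : ℝ) (h₀ : 0 ≤ r₀) (h₁ : 0 ≤ r₁) :
    HKL (Real.sqrt (r₀ * r₁)) r₀ + HKL (Real.sqrt (r₀ * r₁)) r₁ =
        ENNReal.ofReal ((Real.sqrt r₀ - Real.sqrt r₁) ^ 2) ∧
    ∀ r : ℝ, 0 ≤ r →
      ENNReal.ofReal ((Real.sqrt r₀ - Real.sqrt r₁) ^ 2) ≤ HKL r r₀ + HKL r r₁ := by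
  rcases eq_or_lt_of_le h₀ with rfl | h0
  · have hs : Real.sqrt (0 * r₁) = 0 := by simp
    constructor
    · rw [hs]
      simp only [HKL, if_true, ite_true]
      rw [← ENNReal.ofReal_add le_rfl h₁]
      congr 1
      rw [Real.sqrt_zero]
      nlinarith [Real.sq_sqrt h₁]
    · intro r hr
      rcases eq_or_lt_of_le hr with rfl | hrpos
      · simp only [HKL, if_true, ite_true]
        rw [← ENNReal.ofReal_add le_rfl h₁]
        apply ENNReal.ofReal_le_ofReal
        rw [Real.sqrt_zero]
        nlinarith [Real.sq_sqrt h₁]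
      · have : HKL r 0 = ⊤ := by simp [HKL, hrpos.ne']
        rw [this]; simp
  rcases eq_or_lt_of_le h₁ with rfl | h1
  · have hs : Real.sqrt (r₀ * 0) = 0 := by simp
    constructor
    · rw [hs]
      simp only [HKL, if_true, ite_true]
      rw [← ENNReal.ofReal_add h₀ le_rfl]
      congr 1
      rw [Real.sqrt_zero]
      nlinarith [Real.sq_sqrt h₀]
    · intro r hr
      rcases eq_or_lt_of_le hr with rfl | hrpos
      · simp only [HKL, if_true, ite_true]
        rw [← ENNReal.ofReal_add h₀ le_rfl]
        apply ENNReal.ofReal_le_ofReal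
        rw [Real.sqrt_zero]
        nlinarith [Real.sq_sqrt h₀]
      · have : HKL r 0 = ⊤ := by simp [HKL, hrpos.ne']
        rw [this]; simp
  -- both positive
  have hm : 0 < Real.sqrt (r₀ * r₁) := Real.sqrt_pos.mpr (mul_pos h0 h1)
  set m := Real.sqrt (r₀ * r₁) with hmdef
  have hlogm : Real.log m = (Real.log r₀ + Real.log r₁) / 2 := by
    rw [hmdef, Real.log_sqrt (mul_pos h0 h1).le, Real.log_mul h0.ne' h1.ne']
  have hm2 : m = Real.sqrt r₀ * Real.sqrt r₁ := Real.sqrt_mul h₀ r₁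
  have hsq0 : Real.sqrt r₀ ^ 2 = r₀ := Real.sq_sqrt h₀
  have hsq1 : Real.sqrt r₁ ^ 2 = r₁ := Real.sq_sqrt h₁
  constructor
  · simp only [HKL, hm.ne', h0.ne', h1.ne', if_false]
    rw [← ENNReal.ofReal_add (key_nonneg _ _ hm h0) (key_nonneg _ _ hm h1)]
    congr 1
    nlinarith [hlogm, hm2, hsq0, hsq1]
  · intro r hr
    rcases eq_or_lt_of_le hr with rfl | hrpos
    · simp only [HKL, if_true, ite_true]
      rw [← ENNReal.ofReal_add h₀ h₁]
      apply ENNReal.ofReal_le_ofReal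
      nlinarith [hsq0, hsq1, Real.sqrt_nonneg r₀, Real.sqrt_nonneg r₁]
    · simp only [HKL, hrpos.ne', h0.ne', h1.ne', if_false]
      rw [← ENNReal.ofReal_add (key_nonneg _ _ hrpos h0) (key_nonneg _ _ hrpos h1)]
      apply ENNReal.ofReal_le_ofReal
      have hk := key_nonneg r m hrpos hm
      nlinarith [hlogm, hm2, hsq0, hsq1]
end

section
/- For any two finite nonnegative measures μ₀, μ₁ on a measurable space Ω, He₂²(μ₀,μ₁) = min over μ ∈ M(Ω) of KL(μ | μ₀) + KL(μ | μ₁), where KL(γ | μ) := ∫ (ρ ln ρ − ρ + 1) dμ if γ = ρμ ≪ μ and +∞ otherwise, and He₂²(μ₀,μ₁) = ∫ (√ρ₀ − √ρ₁)² dλ for any common dominating measure λ. -/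
open MeasureTheory ENNReal
open scoped Classical

noncomputable def KLdiv {Ω : Type*} [MeasurableSpace Ω] (γ μ : Measure Ω) : ℝ≥0∞ :=
  if γ ≪ μ then
    ∫⁻ x, ENNReal.ofReal
      ((γ.rnDeriv μ x).toReal * Real.log (γ.rnDeriv μ x).toReal
        - (γ.rnDeriv μ x).toReal + 1) ∂μ
  else ⊤

/-!
Write `ρ₀, ρ₁, σ` for the densities of `μ₀, μ₁, μ` with respect to `λ` and `φ(t) = t log t - t + 1`.
Where `σ = t₀ ρ₀ = t₁ ρ₁` one has the pointwise identity
`ρ₀ φ(t₀) + ρ₁ φ(t₁) = (√ρ₀ - √ρ₁)² + 2 √(ρ₀ρ₁) φ(σ / √(ρ₀ρ₁))`,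
so `KL(μ|μ₀) + KL(μ|μ₁) = He₂²(μ₀,μ₁) + 2 KL(μ | √(ρ₀ρ₁) λ)`. The last term is nonnegative and
vanishes for the geometric mean `μ = √(ρ₀ρ₁) λ`, which is finite because `√(ρ₀ρ₁) ≤ ρ₀ + ρ₁`.
-/

open InformationTheory Real

-- When `a * b = 0` the quotient `s / √(a * b)` is junk, but its coefficient vanishes.
theorem mul_klFun_add_mul_klFun {a b s t₀ t₁ : ℝ} (ha : 0 ≤ a) (hb : 0 ≤ b) (ht₀ : 0 ≤ t₀)
    (h₀ : t₀ * a = s) (h₁ : t₁ * b = s) :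
    a * klFun t₀ + b * klFun t₁ =
      (√a - √b) ^ 2 + 2 * √(a * b) * klFun (s / √(a * b)) := by
  have hlhs : a * klFun t₀ + b * klFun t₁ = s * log t₀ + s * log t₁ - 2 * s + a + b := by
    simp only [klFun_apply]
    linear_combination (log t₀ - 1) * h₀ + (log t₁ - 1) * h₁
  have hsq : (√a - √b) ^ 2 = a + b - 2 * √(a * b) := by
    rw [sub_sq, sq_sqrt ha, sq_sqrt hb, sqrt_mul ha]
    ring
  rw [hlhs, hsq]
  rcases ha.eq_or_lt with rfl | ha'
  · simp [← h₀, klFun_zero]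
  rcases hb.eq_or_lt with rfl | hb'
  · simp [← h₁, klFun_zero]
  rcases (mul_nonneg ht₀ ha).eq_or_lt with hs | hs
  · simp [← h₀, ← hs, klFun_zero]
  have hc : 0 < √(a * b) := by positivity
  rw [h₀] at hs
  have e₀ : log t₀ = log s - log a := by
    rw [← log_div hs.ne' ha'.ne', ← h₀, mul_div_cancel_right₀ _ ha'.ne']
  have e₁ : log t₁ = log s - log b := by
    rw [← log_div hs.ne' hb'.ne', ← h₁, mul_div_cancel_right₀ _ hb'.ne']
  have ec : log √(a * b) = (log a + log b) / 2 := by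
    rw [log_sqrt (by positivity), log_mul ha'.ne' hb'.ne']
  rw [klFun_apply, log_div hs.ne' hc.ne', e₀, e₁, ec]
  field_simp
  ring

theorem rpow_half_sub_sup_sq_eq_ofReal {u v : ℝ≥0∞} (hu : u ≠ ∞) (hv : v ≠ ∞) :
    ((u ^ (1 / 2 : ℝ) - v ^ (1 / 2 : ℝ)) ⊔ (v ^ (1 / 2 : ℝ) - u ^ (1 / 2 : ℝ))) ^ (2 : ℝ)
      = ENNReal.ofReal ((√u.toReal - √v.toReal) ^ 2) := by
  have hsqrt : ∀ w : ℝ≥0∞, w ≠ ∞ → w ^ (1 / 2 : ℝ) = ENNReal.ofReal √w.toReal := fun w hw => by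
    rw [sqrt_eq_rpow, ← ofReal_rpow_of_nonneg toReal_nonneg (by norm_num), ofReal_toReal hw]
  rw [hsqrt u hu, hsqrt v hv, ← ofReal_sub _ (sqrt_nonneg _), ← ofReal_sub _ (sqrt_nonneg _),
    ← ofReal_max, ← neg_sub √u.toReal, ← abs_eq_max_neg,
    ofReal_rpow_of_nonneg (abs_nonneg _) (by norm_num), Real.rpow_two, sq_abs]

theorem mul_ofReal_klFun_add_mul_ofReal_klFun {a b s t₀ t₁ : ℝ≥0∞} (ha : a ≠ ∞) (hb : b ≠ ∞)
    (h₀ : t₀ * a = s) (h₁ : t₁ * b = s) :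
    a * ENNReal.ofReal (klFun t₀.toReal) + b * ENNReal.ofReal (klFun t₁.toReal) =
      ((a ^ (1 / 2 : ℝ) - b ^ (1 / 2 : ℝ)) ⊔ (b ^ (1 / 2 : ℝ) - a ^ (1 / 2 : ℝ))) ^ (2 : ℝ) +
      ENNReal.ofReal (2 * √(a.toReal * b.toReal) *
        klFun (s.toReal / √(a.toReal * b.toReal))) := by
  have key := mul_klFun_add_mul_klFun toReal_nonneg toReal_nonneg toReal_nonneg
    (by rw [← toReal_mul, h₀]) (by rw [← toReal_mul, h₁] : t₁.toReal * b.toReal = s.toReal)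
  have hkl : ∀ t : ℝ≥0∞, 0 ≤ klFun t.toReal := fun t => klFun_nonneg toReal_nonneg
  have hkl' : ∀ t : ℝ, 0 ≤ klFun (s.toReal / √t) := fun t => klFun_nonneg (by positivity)
  rw [rpow_half_sub_sup_sq_eq_ofReal ha hb, ← ofReal_add (sq_nonneg _)
      (mul_nonneg (by positivity) (hkl' _)), ← key,
    ofReal_add (mul_nonneg toReal_nonneg (hkl _)) (mul_nonneg toReal_nonneg (hkl _)),
    ofReal_mul toReal_nonneg, ofReal_mul toReal_nonneg, ofReal_toReal ha, ofReal_toReal hb]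

theorem ofReal_sqrt_mul_toReal_le_add (a b : ℝ≥0∞) :
    ENNReal.ofReal √(a.toReal * b.toReal) ≤ a + b := by
  have hsqrt : √(a.toReal * b.toReal) ≤ a.toReal + b.toReal :=
    sqrt_le_iff.mpr ⟨by positivity, by nlinarith [toReal_nonneg (a := a), toReal_nonneg (a := b)]⟩
  calc ENNReal.ofReal √(a.toReal * b.toReal) ≤ ENNReal.ofReal (a.toReal + b.toReal) :=
        ofReal_le_ofReal hsqrt
    _ ≤ a + b := by
        rw [ofReal_add toReal_nonneg toReal_nonneg]
        exact add_le_add ofReal_toReal_le ofReal_toReal_le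

namespace MeasureTheory.Measure

variable {Ω : Type*} [MeasurableSpace Ω]

theorem withDensity_absolutelyContinuous_withDensity {μ : Measure Ω} {f g : Ω → ℝ≥0∞}
    (hf : AEMeasurable f μ) (hg : AEMeasurable g μ) (hfg : ∀ᵐ x ∂μ, g x = 0 → f x = 0) :
    μ.withDensity f ≪ μ.withDensity g := by
  intro s hs
  rw [withDensity_apply_eq_zero' hg] at hs
  rw [withDensity_apply_eq_zero' hf]
  refine measure_mono_null_ae ?_ hs
  filter_upwards [hfg] with x hx
  exact fun ⟨hfx, hxs⟩ => ⟨mt hx hfx, hxs⟩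

noncomputable def geomMean (μ₀ μ₁ lam : Measure Ω) : Measure Ω :=
  lam.withDensity fun x => ENNReal.ofReal √((μ₀.rnDeriv lam x).toReal * (μ₁.rnDeriv lam x).toReal)

section geomMean

variable {μ₀ μ₁ lam : Measure Ω}

theorem geomMean_le_add : geomMean μ₀ μ₁ lam ≤ μ₀ + μ₁ :=
  calc geomMean μ₀ μ₁ lam ≤ lam.withDensity (μ₀.rnDeriv lam + μ₁.rnDeriv lam) :=
        withDensity_mono (ae_of_all _ fun x => ofReal_sqrt_mul_toReal_le_add _ _)
    _ ≤ μ₀ + μ₁ := by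
        rw [withDensity_add_left (measurable_rnDeriv μ₀ lam)]
        exact add_le_add (withDensity_rnDeriv_le μ₀ lam) (withDensity_rnDeriv_le μ₁ lam)

instance [IsFiniteMeasure μ₀] [IsFiniteMeasure μ₁] : IsFiniteMeasure (geomMean μ₀ μ₁ lam) :=
  isFiniteMeasure_of_le (μ₀ + μ₁) geomMean_le_add

theorem geomMean_absolutelyContinuous_left [μ₀.HaveLebesgueDecomposition lam] (h₀ : μ₀ ≪ lam) :
    geomMean μ₀ μ₁ lam ≪ μ₀ := by
  conv_rhs => rw [← withDensity_rnDeriv_eq μ₀ lam h₀]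
  refine withDensity_absolutelyContinuous_withDensity (by fun_prop) (by fun_prop)
    (ae_of_all _ fun x hx => ?_)
  simp [hx]

theorem geomMean_absolutelyContinuous_right [μ₁.HaveLebesgueDecomposition lam] (h₁ : μ₁ ≪ lam) :
    geomMean μ₀ μ₁ lam ≪ μ₁ := by
  conv_rhs => rw [← withDensity_rnDeriv_eq μ₁ lam h₁]
  refine withDensity_absolutelyContinuous_withDensity (by fun_prop) (by fun_prop)
    (ae_of_all _ fun x hx => ?_)
  simp [hx]

theorem rnDeriv_geomMean [SigmaFinite lam] :
    (geomMean μ₀ μ₁ lam).rnDeriv lam =ᵐ[lam]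
      fun x => ENNReal.ofReal √((μ₀.rnDeriv lam x).toReal * (μ₁.rnDeriv lam x).toReal) :=
  rnDeriv_withDensity lam (by fun_prop)

end geomMean

end MeasureTheory.Measure

section KLdiv

variable {Ω : Type*} [MeasurableSpace Ω]

theorem KLdiv_eq_lintegral_rnDeriv_mul {μ ν lam : Measure Ω} [ν.HaveLebesgueDecomposition lam]
    (hμν : μ ≪ ν) (hν : ν ≪ lam) :
    KLdiv μ ν = ∫⁻ x, ν.rnDeriv lam x * ENNReal.ofReal (klFun (μ.rnDeriv ν x).toReal) ∂lam := by
  rw [KLdiv, if_pos hμν, lintegral_rnDeriv_mul hν (by fun_prop)]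
  congr with x
  rw [klFun_apply]
  ring_nf

theorem KLdiv_add_KLdiv_eq_lintegral {μ μ₀ μ₁ lam : Measure Ω} [SigmaFinite μ] [SigmaFinite μ₀]
    [SigmaFinite μ₁] [SigmaFinite lam] (hμ₀ : μ ≪ μ₀) (hμ₁ : μ ≪ μ₁) (h₀ : μ₀ ≪ lam)
    (h₁ : μ₁ ≪ lam) :
    KLdiv μ μ₀ + KLdiv μ μ₁ =
      ∫⁻ x, ((μ₀.rnDeriv lam x ^ (1 / 2 : ℝ) - μ₁.rnDeriv lam x ^ (1 / 2 : ℝ)) ⊔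
              (μ₁.rnDeriv lam x ^ (1 / 2 : ℝ) - μ₀.rnDeriv lam x ^ (1 / 2 : ℝ))) ^ (2 : ℝ) ∂lam +
      ∫⁻ x, ENNReal.ofReal
        (2 * √((μ₀.rnDeriv lam x).toReal * (μ₁.rnDeriv lam x).toReal) *
          klFun ((μ.rnDeriv lam x).toReal /
            √((μ₀.rnDeriv lam x).toReal * (μ₁.rnDeriv lam x).toReal))) ∂lam := by
  rw [KLdiv_eq_lintegral_rnDeriv_mul hμ₀ h₀, KLdiv_eq_lintegral_rnDeriv_mul hμ₁ h₁,
    ← lintegral_add_left (by fun_prop), ← lintegral_add_left (by fun_prop)]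
  refine lintegral_congr_ae ?_
  filter_upwards [Measure.rnDeriv_mul_rnDeriv hμ₀, Measure.rnDeriv_mul_rnDeriv hμ₁,
    Measure.rnDeriv_lt_top μ₀ lam, Measure.rnDeriv_lt_top μ₁ lam] with x h₀ h₁ hρ₀ hρ₁
  exact mul_ofReal_klFun_add_mul_ofReal_klFun hρ₀.ne hρ₁.ne h₀ h₁

end KLdiv

/-- `He₂²(μ₀,μ₁) = min_{μ} KL(μ|μ₀) + KL(μ|μ₁)`, the minimum being over all finite
nonnegative measures `μ`. -/
theorem hellinger_sq_eq_min_KL {Ω : Type*} [MeasurableSpace Ω]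
    (μ₀ μ₁ : Measure Ω) [IsFiniteMeasure μ₀] [IsFiniteMeasure μ₁]
    (lam : Measure Ω) [SigmaFinite lam] (h₀ : μ₀ ≪ lam) (h₁ : μ₁ ≪ lam) :
    IsLeast {v : ℝ≥0∞ | ∃ μ : Measure Ω, IsFiniteMeasure μ ∧ v = KLdiv μ μ₀ + KLdiv μ μ₁}
      (∫⁻ x, ((μ₀.rnDeriv lam x ^ (1 / 2 : ℝ) - μ₁.rnDeriv lam x ^ (1 / 2 : ℝ)) ⊔
              (μ₁.rnDeriv lam x ^ (1 / 2 : ℝ) - μ₀.rnDeriv lam x ^ (1 / 2 : ℝ))) ^ (2 : ℝ)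
          ∂lam) := by
  refine ⟨⟨μ₀.geomMean μ₁ lam, inferInstance, ?_⟩, ?_⟩
  · rw [KLdiv_add_KLdiv_eq_lintegral (Measure.geomMean_absolutelyContinuous_left h₀)
      (Measure.geomMean_absolutelyContinuous_right h₁) h₀ h₁]
    convert (add_zero _).symm using 2
    refine lintegral_eq_zero_of_ae_eq_zero ?_
    filter_upwards [Measure.rnDeriv_geomMean] with x hx
    rw [hx, toReal_ofReal (sqrt_nonneg _)]
    by_cases hc : √((μ₀.rnDeriv lam x).toReal * (μ₁.rnDeriv lam x).toReal) = 0
    · simp [hc]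
    · simp only [div_self hc, klFun_one, mul_zero, ofReal_zero, Pi.zero_apply]
  · rintro _ ⟨μ, hμ, rfl⟩
    by_cases hμ₀ : μ ≪ μ₀
    · by_cases hμ₁ : μ ≪ μ₁
      · rw [KLdiv_add_KLdiv_eq_lintegral hμ₀ hμ₁ h₀ h₁]
        exact le_self_add
      · simp [KLdiv, hμ₁]
    · simp [KLdiv, hμ₀]
end

section
/- Pointwise, for all r₀, r₁ ≥ 0: (√r₀ − √r₁)² ≤ H_KL(r₀, r₁), where H_KL(r₀,r₁) = r₀(ln r₀ − ln r₁) + r₁ − r₀ for r₀,r₁ > 0, H_KL(0,r₁) = r₁, and H_KL(r₀,0) = +∞ for r₀ > 0. -/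
open scoped ENNReal

open Real

/- `log x ≤ x - 1` at `x = √(b / a)`, multiplied by `2a`, gives `a (log b - log a) ≤ 2√a√b - 2a`. -/
lemma sq_sqrt_sub_sqrt_le_mul_log_sub {a b : ℝ} (ha : 0 < a) (hb : 0 < b) :
    (√a - √b) ^ 2 ≤ a * (log a - log b) + b - a := by
  have hsa : 0 < √a := sqrt_pos.mpr ha
  have hlog : log (√b / √a) = (log b - log a) / 2 := by
    rw [log_div (sqrt_pos.mpr hb).ne' hsa.ne', log_sqrt hb.le, log_sqrt ha.le]
    ring
  have key : (log b - log a) / 2 ≤ √b / √a - 1 :=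
    hlog ▸ log_le_sub_one_of_pos (by positivity)
  have hscaled : a * (log b - log a) ≤ 2 * √a * √b - 2 * a := by
    have hratio : a * (√b / √a) = √a * √b := by
      field_simp
      exact (sq_sqrt ha.le).symm
    nlinarith [mul_le_mul_of_nonneg_left key ha.le]
  nlinarith [sq_sqrt ha.le, sq_sqrt hb.le]

/-- Pointwise Hellinger–KL inequality: `(√r₀ − √r₁)² ≤ H_KL(r₀, r₁)`. -/
theorem sq_sqrt_sub_le_HKL (r₀ r₁ : ℝ) (h₀ : 0 ≤ r₀) (h₁ : 0 ≤ r₁) :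
    ENNReal.ofReal ((Real.sqrt r₀ - Real.sqrt r₁) ^ 2) ≤ HKL r₀ r₁ := by
  unfold HKL
  split_ifs with hr₀ hr₁
  · simp [hr₀, sq_sqrt h₁]
  · exact le_top
  · exact ENNReal.ofReal_le_ofReal <|
      sq_sqrt_sub_sqrt_le_mul_log_sub (h₀.lt_of_ne' hr₀) (h₁.lt_of_ne' hr₁)
end

section
/- Let p ∈ (1,∞) with conjugate q. For real ψ₀, ψ₁, the inequality r·ψ₀ + s·ψ₁ ≤ |r^(1/p) − s^(1/p)|^p for all r, s > 0 holds if and only if ψ₀ < 1, ψ₁ < 1, and (1 − ψ₀^(q−1))(1 − ψ₁^(q−1)) ≥ 1, using the signed power convention x^a := sign(x)|x|^a. -/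
/-!
Write `φ x = spow x (p - 1)`; since `(p - 1) (q - 1) = 1`, its inverse is `spow · (q - 1)`.
For `a > 0` the gradient of the convex, positively homogeneous `H_p` at `(1, a^p)` is
`(φ (1 - a), φ (1 - 1/a))`, so `r φ (1 - a) + s φ (1 - 1/a) ≤ H_p(r, s)` is a supporting
hyperplane, touching at `(r, s) = (1, a^p)`; it is proved from the convexity of `t ↦ t^p`.
Admissibility forces `ψ₀ < 1` (let `r → ∞`: `r - H_p(r, 1) ≥ r^(1/q)`). Then with
`a := 1 - ψ₀^(q-1) > 0` we have `ψ₀ = φ (1 - a)`, and testing at the contact point shows that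
admissibility of `(ψ₀, ψ₁)` is exactly `ψ₁ ≤ φ (1 - 1/a)`, i.e. `ψ₁^(q-1) ≤ 1 - 1/a`.
-/

/-- Signed real power: `x^a := sign(x)·|x|^a`. -/
noncomputable def spow (x a : ℝ) : ℝ := if x < 0 then -((-x) ^ a) else x ^ a

open Real Filter

section Spow

variable {a x y c : ℝ}

lemma spow_of_nonneg (hx : 0 ≤ x) (c : ℝ) : spow x c = x ^ c := by
  simp [spow, not_lt.2 hx]

lemma spow_of_neg (hx : x < 0) (c : ℝ) : spow x c = -((-x) ^ c) := by
  simp [spow, hx]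

lemma zero_spow (hc : c ≠ 0) : spow 0 c = 0 := by
  simp [spow, zero_rpow hc]

lemma one_spow (c : ℝ) : spow 1 c = 1 := by
  simp [spow]

lemma spow_one (x : ℝ) : spow x 1 = x := by
  rcases lt_or_ge x 0 with hx | hx
  · rw [spow_of_neg hx, rpow_one, neg_neg]
  · rw [spow_of_nonneg hx, rpow_one]

lemma neg_spow (hc : c ≠ 0) (x : ℝ) : spow (-x) c = -spow x c := by
  rcases lt_trichotomy x 0 with hx | rfl | hx
  · rw [spow_of_nonneg (by linarith) c, spow_of_neg hx, neg_neg]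
  · rw [neg_zero, zero_spow hc, neg_zero]
  · rw [spow_of_neg (neg_lt_zero.2 hx), spow_of_nonneg hx.le, neg_neg]

lemma spow_spow (x c d : ℝ) : spow (spow x c) d = spow x (c * d) := by
  rcases lt_or_ge x 0 with hx | hx
  · have hxc : 0 < (-x) ^ c := rpow_pos_of_pos (neg_pos.2 hx) c
    rw [spow_of_neg hx, spow_of_neg (neg_lt_zero.2 hxc), neg_neg, spow_of_neg hx, rpow_mul (neg_nonneg.2 hx.le)]
  · rw [spow_of_nonneg hx, spow_of_nonneg (rpow_nonneg hx c), spow_of_nonneg hx, rpow_mul hx]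

lemma mul_spow_of_pos (hy : 0 < y) (x c : ℝ) : spow (x * y) c = spow x c * y ^ c := by
  rcases lt_or_ge x 0 with hx | hx
  · rw [spow_of_neg hx, spow_of_neg (mul_neg_of_neg_of_pos hx hy), ← neg_mul,
      mul_rpow (neg_nonneg.2 hx.le) hy.le, neg_mul]
  · rw [spow_of_nonneg hx, spow_of_nonneg (mul_nonneg hx hy.le), mul_rpow hx hy.le]

lemma spow_sub_one_mul_self {p : ℝ} (hp : p ≠ 0) (x : ℝ) : spow x (p - 1) * x = |x| ^ p := by
  rcases lt_trichotomy x 0 with hx | rfl | hx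
  · rw [spow_of_neg hx, abs_of_neg hx, rpow_sub_one (neg_ne_zero.2 hx.ne)]
    field_simp [hx.ne]
  · rw [mul_zero, abs_zero, zero_rpow hp]
  · rw [spow_of_nonneg hx.le, abs_of_pos hx, rpow_sub_one hx.ne']
    field_simp

lemma spow_left_strictMono (hc : 0 < c) : StrictMono (spow · c) := by
  intro x y hxy
  show spow x c < spow y c
  rcases lt_or_ge y 0 with hy | hy
  · rw [spow_of_neg hy, spow_of_neg (hxy.trans hy), neg_lt_neg_iff]
    exact rpow_lt_rpow (by linarith) (by linarith) hc
  rcases lt_or_ge x 0 with hx | hx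
  · rw [spow_of_neg hx, spow_of_nonneg hy]
    linarith [rpow_pos_of_pos (neg_pos.2 hx) c, rpow_nonneg hy c]
  · rw [spow_of_nonneg hx, spow_of_nonneg hy]
    exact rpow_lt_rpow hx hxy hc

lemma rpow_mul_spow_one_sub_inv (ha : 0 < a) (hc : c ≠ 0) :
    a ^ c * spow (1 - a⁻¹) c = -spow (1 - a) c := by
  have h : 1 - a⁻¹ = -(1 - a) * a⁻¹ := by field_simp; ring
  rw [h, mul_spow_of_pos (inv_pos.2 ha), neg_spow hc, inv_rpow ha.le]
  field_simp [(rpow_pos_of_pos ha c).ne']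

end Spow

lemma rpow_add_le_rpow_div_add_rpow_div {p u v s t : ℝ} (hp : 1 ≤ p) (hu : 0 ≤ u) (hv : 0 ≤ v)
    (hs : 0 < s) (ht : 0 < t) (hst : s + t = 1) :
    (u + v) ^ p ≤ u ^ p / s ^ (p - 1) + v ^ p / t ^ (p - 1) := by
  have hconv := (convexOn_rpow hp).2 (Set.mem_Ici.2 (div_nonneg hu hs.le))
    (Set.mem_Ici.2 (div_nonneg hv ht.le)) hs.le ht.le hst
  have hweight : ∀ {w z : ℝ}, 0 < w → 0 ≤ z → w * (z / w) ^ p = z ^ p / w ^ (p - 1) := by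
    intro w z hw hz
    rw [div_rpow hz hw.le, rpow_sub_one hw.ne']
    field_simp
  simp only [smul_eq_mul, mul_div_cancel₀ _ hs.ne', mul_div_cancel₀ _ ht.ne'] at hconv
  rwa [hweight hs hu, hweight ht hv] at hconv

section Supporting

variable {p a x y : ℝ}

lemma hellinger_supporting_of_one_lt (hp : 1 < p) (ha : 1 < a) (hx : 0 ≤ x) (hy : 0 ≤ y) :
    x ^ p * spow (1 - a) (p - 1) + y ^ p * spow (1 - a⁻¹) (p - 1) ≤ |x - y| ^ p := by
  have ha₀ : 0 < a := one_pos.trans ha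
  have hs : 0 < 1 - a⁻¹ := sub_pos.2 (inv_lt_one_of_one_lt₀ ha)
  have hsp : 0 < (1 - a⁻¹) ^ (p - 1) := rpow_pos_of_pos hs _
  have hratio : (1 - a⁻¹) ^ (p - 1) / (a⁻¹) ^ (p - 1) = (a - 1) ^ (p - 1) := by
    rw [← div_rpow hs.le (inv_nonneg.2 ha₀.le)]
    congr 1
    field_simp
  have hy_le : y ^ p ≤ (|x - y| + x) ^ p := by
    gcongr
    linarith [neg_abs_le (x - y)]
  have hconv := rpow_add_le_rpow_div_add_rpow_div hp.le (abs_nonneg (x - y)) hx hs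
    (inv_pos.2 ha₀) (sub_add_cancel 1 a⁻¹)
  rw [spow_of_neg (by linarith), neg_sub, spow_of_nonneg hs.le]
  calc x ^ p * -(a - 1) ^ (p - 1) + y ^ p * (1 - a⁻¹) ^ (p - 1)
      ≤ x ^ p * -(a - 1) ^ (p - 1)
        + (|x - y| ^ p / (1 - a⁻¹) ^ (p - 1) + x ^ p / a⁻¹ ^ (p - 1)) * (1 - a⁻¹) ^ (p - 1) := by
        gcongr
        exact hy_le.trans hconv
    _ = |x - y| ^ p := by
        rw [← hratio, add_mul, div_mul_cancel₀ _ hsp.ne']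
        ring

lemma hellinger_supporting (hp : 1 < p) (ha : 0 < a) (hx : 0 ≤ x) (hy : 0 ≤ y) :
    x ^ p * spow (1 - a) (p - 1) + y ^ p * spow (1 - a⁻¹) (p - 1) ≤ |x - y| ^ p := by
  rcases lt_trichotomy a 1 with ha₁ | rfl | ha₁
  · have h := hellinger_supporting_of_one_lt hp ((one_lt_inv₀ ha).2 ha₁) hy hx
    rwa [inv_inv, abs_sub_comm, add_comm] at h
  · rw [inv_one, sub_self, zero_spow (by linarith)]
    simp only [mul_zero, add_zero]
    positivity
  · exact hellinger_supporting_of_one_lt hp ha₁ hx hy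

lemma hellinger_supporting_eq (hp : 1 < p) (ha : 0 < a) :
    spow (1 - a) (p - 1) + a ^ p * spow (1 - a⁻¹) (p - 1) = |1 - a| ^ p := by
  have hpow : a ^ p = a * a ^ (p - 1) := by
    rw [rpow_sub_one ha.ne']
    field_simp
  rw [hpow, mul_assoc, rpow_mul_spow_one_sub_inv ha (by linarith),
    ← spow_sub_one_mul_self (by linarith)]
  ring

end Supporting

lemma rpow_sub_one_le_rpow_sub_rpow {p x : ℝ} (hp : 1 ≤ p) (hx : 1 ≤ x) :
    x ^ (p - 1) ≤ x ^ p - (x - 1) ^ p := by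
  have hsplit : ∀ z : ℝ, 0 ≤ z → z ^ p = z ^ (p - 1) * z := fun z hz => by
    rw [← rpow_add_one' hz (by rw [sub_add_cancel]; positivity), sub_add_cancel]
  have hmono : (x - 1) ^ (p - 1) ≤ x ^ (p - 1) :=
    rpow_le_rpow (by linarith) (by linarith) (by linarith)
  rw [hsplit x (by linarith), hsplit (x - 1) (by linarith)]
  nlinarith [mul_le_mul_of_nonneg_right hmono (sub_nonneg.2 hx)]

/-- The admissibility condition after the substitution `r = x ^ p`, `s = y ^ p`. -/
def HellingerAdmissible (p ψ₀ ψ₁ : ℝ) : Prop :=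
  ∀ x y : ℝ, 0 < x → 0 < y → x ^ p * ψ₀ + y ^ p * ψ₁ ≤ |x - y| ^ p

section Admissible

variable {p ψ₀ ψ₁ : ℝ}

lemma forall_le_hellinger_iff (hp : 0 < p) :
    (∀ r s : ℝ, 0 < r → 0 < s → r * ψ₀ + s * ψ₁ ≤ |r ^ (1 / p) - s ^ (1 / p)| ^ p) ↔
      HellingerAdmissible p ψ₀ ψ₁ := by
  refine ⟨fun h x y hx hy => ?_, fun h r s hr hs => ?_⟩
  · simpa only [one_div, rpow_rpow_inv hx.le hp.ne', rpow_rpow_inv hy.le hp.ne'] using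
      h (x ^ p) (y ^ p) (by positivity) (by positivity)
  · simpa only [one_div, rpow_inv_rpow hr.le hp.ne', rpow_inv_rpow hs.le hp.ne'] using
      h (r ^ (1 / p)) (s ^ (1 / p)) (by positivity) (by positivity)

lemma HellingerAdmissible.lt_one_left (hp : 1 < p) (h : HellingerAdmissible p ψ₀ ψ₁) :
    ψ₀ < 1 := by
  by_contra! h₀
  obtain ⟨x, hx₁, hx⟩ : ∃ x : ℝ, 1 ≤ x ∧ -ψ₁ < x ^ (p - 1) :=
    ((eventually_ge_atTop 1).and
      ((tendsto_rpow_atTop (sub_pos.2 hp)).eventually_gt_atTop (-ψ₁))).exists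
  have hadm := h x 1 (by linarith) one_pos
  rw [one_rpow, one_mul, abs_of_nonneg (by linarith)] at hadm
  have hgap := rpow_sub_one_le_rpow_sub_rpow hp.le hx₁
  have hψ₀ : x ^ p ≤ x ^ p * ψ₀ := le_mul_of_one_le_right (by positivity) h₀
  linarith

lemma hellingerAdmissible_spow_iff {a : ℝ} (hp : 1 < p) (ha : 0 < a) :
    HellingerAdmissible p (spow (1 - a) (p - 1)) ψ₁ ↔ ψ₁ ≤ spow (1 - a⁻¹) (p - 1) := by
  refine ⟨fun h => ?_, fun h x y hx hy => ?_⟩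
  · have hadm := h 1 a one_pos ha
    rw [one_rpow, one_mul, ← hellinger_supporting_eq hp ha, add_le_add_iff_left] at hadm
    exact le_of_mul_le_mul_left hadm (by positivity)
  · calc x ^ p * spow (1 - a) (p - 1) + y ^ p * ψ₁
        ≤ x ^ p * spow (1 - a) (p - 1) + y ^ p * spow (1 - a⁻¹) (p - 1) := by gcongr
      _ ≤ |x - y| ^ p := hellinger_supporting hp ha hx.le hy.le

end Admissible

/-- Characterization of the dual admissible pairs for the `p`-Hellinger perspective
function `H_p(r,s) = |r^{1/p} − s^{1/p}|^p`. -/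
theorem mem_dual_Hp_iff (p q : ℝ) (hp : 1 < p) (hq : 1 / p + 1 / q = 1) (ψ₀ ψ₁ : ℝ) :
    (∀ r s : ℝ, 0 < r → 0 < s →
        r * ψ₀ + s * ψ₁ ≤ |r ^ (1 / p) - s ^ (1 / p)| ^ p) ↔
      (ψ₀ < 1 ∧ ψ₁ < 1 ∧ 1 ≤ (1 - spow ψ₀ (q - 1)) * (1 - spow ψ₁ (q - 1))) := by
  have hpq : p.HolderConjugate q := holderConjugate_iff.2 ⟨hp, by simpa only [one_div] using hq⟩
  have hq₁ : 0 < q - 1 := hpq.symm.sub_one_pos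
  have hinv : (p - 1) * (q - 1) = 1 := by linear_combination hpq.mul_eq_add
  have hφ := spow_left_strictMono hq₁
  rw [forall_le_hellinger_iff (by linarith)]
  by_cases hψ₀ : ψ₀ < 1
  swap
  · exact iff_of_false (fun h => hψ₀ (h.lt_one_left hp)) (fun h => hψ₀ h.1)
  set a := 1 - spow ψ₀ (q - 1) with ha_def
  have ha : 0 < a := sub_pos.2 (by simpa only [one_spow] using hφ hψ₀)
  have hψ₀_eq : spow (1 - a) (p - 1) = ψ₀ := by
    rw [ha_def, sub_sub_cancel, spow_spow, mul_comm, hinv, spow_one]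
  conv_lhs => rw [← hψ₀_eq, hellingerAdmissible_spow_iff hp ha]
  simp only [hψ₀, true_and]
  rw [← hφ.le_iff_le, ← hφ.lt_iff_lt, spow_spow, hinv, spow_one, one_spow,
    le_sub_comm, inv_le_iff_one_le_mul₀' ha]
  exact ⟨fun h => ⟨sub_pos.1 (pos_of_mul_pos_right (by linarith) ha.le), h⟩, And.right⟩
end

section
/- Let (X,d) be a metric space, E : ℝ² → ℝ a C² convex function with 1-Lipschitz gradient, J := Id − ∇E, and f = (f₁,f₂) : X → ℝ² a bounded Lipschitz map. Then g = (g₁,g₂) := J ∘ f satisfies, at every point x ∈ X, |Dg₁|²(x) + |Dg₂|²(x) ≤ |Df₁|²(x) + |Df₂|²(x), where |Dh|(x) := limsup_{y→x} |h(y) − h(x)|/d(x,y) (set to 0 at isolated points). -/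
open scoped Topology Classical NNReal

/-- The local (descending) slope `|Dh|(x) = limsup_{y→x} |h(y)−h(x)|/d(x,y)`,
set to `0` at isolated points. -/
noncomputable def lipSlope {X : Type*} [MetricSpace X] (h : X → ℝ) (x : X) : ℝ :=
  if 𝓝[≠] x = ⊥ then 0
  else Filter.limsup (fun y => |h y - h x| / dist y x) (𝓝[≠] x)

/-!
At `p = f x` the map `J = id - ∇E` is differentiable with derivative `A = I - D(∇E)(p)`, a
symmetric matrix with `0 ≤ A ≤ I`: convexity gives `D(∇E)(p) ≥ 0` and the Lipschitz bound gives
`D(∇E)(p) ≤ I`. So `g y - g x = A (f y - f x) + o(d(x, y))`, and taking `limsup`s row by row,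
`|Dgᵢ| ≤ |aᵢ₁| |Df₁| + |aᵢ₂| |Df₂|`. The matrix `|A|` of absolute values of the entries is
conjugate to `A` by a sign flip, so still `0 ≤ |A| ≤ I`, and for such a symmetric `2 × 2` matrix
`|A|² ≤ I`; applied to the vector `(|Df₁|, |Df₂|)` this is the claim.
-/

open Filter Asymptotics InnerProductSpace

section Gradient

variable {F : Type*} [NormedAddCommGroup F] [InnerProductSpace ℝ F]

lemma inner_fderiv_apply_self_le_of_lipschitzWith {f : F → F} {K : ℝ≥0}
    (hf : LipschitzWith K f) (p z : F) : inner ℝ (fderiv ℝ f p z) z ≤ K * ‖z‖ ^ 2 :=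
  calc inner ℝ (fderiv ℝ f p z) z ≤ ‖fderiv ℝ f p z‖ * ‖z‖ := real_inner_le_norm _ _
    _ ≤ ‖fderiv ℝ f p‖ * ‖z‖ * ‖z‖ := by gcongr; exact (fderiv ℝ f p).le_opNorm z
    _ ≤ K * ‖z‖ ^ 2 := by
      rw [sq, ← mul_assoc]; gcongr; exact norm_fderiv_le_of_lipschitz ℝ hf

lemma hasDerivAt_add_smul (p z : F) (t : ℝ) : HasDerivAt (fun s : ℝ => p + s • z) z t := by
  simpa using ((hasDerivAt_id t).smul_const z).const_add p

variable [CompleteSpace F] {E : F → ℝ}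

lemma gradient_eq_toDual_symm_comp_fderiv : gradient E = (toDual ℝ F).symm ∘ fderiv ℝ E := by
  rw [← toDual_comp_gradient, ← Function.comp_assoc, LinearIsometryEquiv.symm_comp_self,
    Function.id_comp]

lemma contDiff_gradient {n : WithTop ℕ∞} (hE : ContDiff ℝ (n + 1) E) :
    ContDiff ℝ n (gradient E) := by
  rw [gradient_eq_toDual_symm_comp_fderiv]
  exact (toDual ℝ F).symm.contDiff.comp (hE.fderiv_right le_rfl)

lemma inner_fderiv_gradient_apply (p v w : F) :
    inner ℝ (fderiv ℝ (gradient E) p v) w = fderiv ℝ (fderiv ℝ E) p v w := by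
  rw [gradient_eq_toDual_symm_comp_fderiv, LinearIsometryEquiv.comp_fderiv]
  exact toDual_symm_apply

lemma isSymmetric_fderiv_gradient (hE : ContDiff ℝ 2 E) (p : F) :
    (fderiv ℝ (gradient E) p : F →ₗ[ℝ] F).IsSymmetric := fun v w => by
  rw [ContinuousLinearMap.coe_coe, real_inner_comm _ v, inner_fderiv_gradient_apply,
    inner_fderiv_gradient_apply]
  exact hE.contDiffAt.isSymmSndFDerivAt (by simp) v w

lemma hasDerivAt_comp_add_smul {p z : F} {t : ℝ} (hE : DifferentiableAt ℝ E (p + t • z)) :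
    HasDerivAt (fun s : ℝ => E (p + s • z)) (inner ℝ (gradient E (p + t • z)) z) t := by
  simpa [Function.comp_def, toDual_apply_apply] using
    hE.hasGradientAt.hasFDerivAt.comp_hasDerivAt t (hasDerivAt_add_smul p z t)

lemma ConvexOn.inner_fderiv_gradient_self_nonneg (hconv : ConvexOn ℝ Set.univ E)
    (hE : Differentiable ℝ E) {p : F} (hgrad : DifferentiableAt ℝ (gradient E) p) (z : F) :
    0 ≤ inner ℝ (fderiv ℝ (gradient E) p z) z := by
  set φ : ℝ → ℝ := fun s => E (p + s • z)
  have hφ : ∀ t, HasDerivAt φ (inner ℝ (gradient E (p + t • z)) z) t :=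
    fun t => hasDerivAt_comp_add_smul (hE _)
  have hφconv : ConvexOn ℝ Set.univ φ := by
    simpa [Function.comp_def, AffineMap.lineMap_apply, add_comm] using
      hconv.comp_affineMap (AffineMap.lineMap (k := ℝ) p (p + z))
  have hmono : Monotone (deriv φ) := by
    simpa using hφconv.monotoneOn_deriv fun t _ => (hφ t).differentiableAt
  rw [show deriv φ = fun t => inner ℝ (gradient E (p + t • z)) z from
    funext fun t => (hφ t).deriv] at hmono
  have hgrad' : HasFDerivAt (gradient E) (fderiv ℝ (gradient E) p) (p + (0 : ℝ) • z) := by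
    simpa using hgrad.hasFDerivAt
  have hderiv := (hgrad'.comp_hasDerivAt 0 (hasDerivAt_add_smul p z 0)).inner ℝ
    (hasDerivAt_const (0 : ℝ) z)
  simp only [Function.comp_def, inner_zero_right, zero_add] at hderiv
  exact hderiv.nonneg_of_monotone hmono

lemma ConvexOn.inner_id_sub_fderiv_gradient_self_mem_Icc (hconv : ConvexOn ℝ Set.univ E)
    (hE : Differentiable ℝ E) (hlip : LipschitzWith 1 (gradient E)) {p : F}
    (hgrad : DifferentiableAt ℝ (gradient E) p) (z : F) :
    inner ℝ ((ContinuousLinearMap.id ℝ F - fderiv ℝ (gradient E) p) z) z ∈ Set.Icc 0 (‖z‖ ^ 2) := by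
  have hH₀ := hconv.inner_fderiv_gradient_self_nonneg hE hgrad z
  have hH₁ := inner_fderiv_apply_self_le_of_lipschitzWith hlip p z
  rw [NNReal.coe_one, one_mul] at hH₁
  rw [sub_apply, ContinuousLinearMap.id_apply, inner_sub_left, real_inner_self_eq_norm_sq]
  exact ⟨by linarith, by linarith⟩

end Gradient

section Slope

variable {X : Type*} [MetricSpace X]

lemma LipschitzWith.isBigO_sub_dist {G : Type*} [SeminormedAddCommGroup G] {f : X → G}
    {K : ℝ≥0} (hf : LipschitzWith K f) (x : X) (l : Filter X) :
    (fun y => f y - f x) =O[l] fun y => dist y x :=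
  IsBigO.of_bound K <| Eventually.of_forall fun y => by
    simpa [← dist_eq_norm, abs_of_nonneg dist_nonneg] using hf.dist_le_mul y x

lemma HasFDerivAt.isLittleO_comp_sub_of_isBigO {G H : Type*} [NormedAddCommGroup G]
    [NormedSpace ℝ G] [NormedAddCommGroup H] [NormedSpace ℝ H] {φ : G → H} {φ' : G →L[ℝ] H}
    {f : X → G} {x : X} (hφ : HasFDerivAt φ φ' (f x))
    (hf : (fun y => f y - f x) =O[𝓝 x] fun y => dist y x) :
    (fun y => φ (f y) - φ (f x) - φ' (f y - f x)) =o[𝓝 x] fun y => dist y x := by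
  have hdist : Tendsto (fun y => dist y x) (𝓝 x) (𝓝 0) := by
    simpa using (continuous_id.dist (continuous_const (y := x))).tendsto x
  have hlim : Tendsto f (𝓝 x) (𝓝 (f x)) :=
    tendsto_sub_nhds_zero_iff.1 (hf.trans_tendsto hdist)
  exact (hφ.isLittleO.comp_tendsto hlim).trans_isBigO hf

/-- A `limsup` in `ℝ` that is not bounded above is the junk value `sInf ∅ = 0`. -/
lemma lipSlope_nonneg (h : X → ℝ) (x : X) : 0 ≤ lipSlope h x := by
  unfold lipSlope
  split_ifs with hx
  · exact le_rfl
  have : (𝓝[≠] x).NeBot := ⟨hx⟩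
  refine Real.sInf_nonneg fun a (ha : ∀ᶠ y in 𝓝[≠] x, |h y - h x| / dist y x ≤ a) => ?_
  obtain ⟨y, hy⟩ := ha.exists
  exact (div_nonneg (abs_nonneg _) dist_nonneg).trans hy

lemma limsup_le_mul_limsup_add_mul_limsup {ι : Type*} {l : Filter ι} {u v w : ι → ℝ}
    {a b : ℝ} (ha : 0 ≤ a) (hb : 0 ≤ b) (hu : IsCoboundedUnder (· ≤ ·) l u)
    (hv : IsBoundedUnder (· ≤ ·) l v) (hw : IsBoundedUnder (· ≤ ·) l w)
    (h : ∀ ε > 0, ∀ᶠ i in l, u i ≤ a * v i + b * w i + ε) :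
    limsup u l ≤ a * limsup v l + b * limsup w l := by
  refine le_of_forall_pos_le_add fun ε hε => ?_
  set δ := ε / (a + b + 1)
  have hδ : 0 < δ := by positivity
  have hbound : ∀ᶠ i in l, u i ≤ a * (limsup v l + δ) + b * (limsup w l + δ) + δ := by
    filter_upwards [h δ hδ, eventually_lt_of_limsup_lt (lt_add_of_pos_right _ hδ) hv,
      eventually_lt_of_limsup_lt (lt_add_of_pos_right _ hδ) hw] with i hi hvi hwi
    calc u i ≤ a * v i + b * w i + δ := hi
      _ ≤ a * (limsup v l + δ) + b * (limsup w l + δ) + δ := by gcongr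
  calc limsup u l ≤ a * (limsup v l + δ) + b * (limsup w l + δ) + δ := limsup_le_of_le hu hbound
    _ = a * limsup v l + b * limsup w l + ε := by
      simp only [δ]; field_simp; ring

lemma LipschitzWith.isBoundedUnder_abs_sub_div_dist {f : X → ℝ} {K : ℝ≥0}
    (hf : LipschitzWith K f) (x : X) (l : Filter X) :
    IsBoundedUnder (· ≤ ·) l fun y => |f y - f x| / dist y x :=
  isBoundedUnder_of ⟨K, fun y => div_le_of_le_mul₀ dist_nonneg K.2 <| by
    simpa [Real.dist_eq] using hf.dist_le_mul y x⟩

lemma lipSlope_le_of_isLittleO {u v w : X → ℝ} {x : X} {a b : ℝ} {K₁ K₂ : ℝ≥0}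
    (hv : LipschitzWith K₁ v) (hw : LipschitzWith K₂ w)
    (h : (fun y => u y - u x - (a * (v y - v x) + b * (w y - w x))) =o[𝓝 x]
      fun y => dist y x) :
    lipSlope u x ≤ |a| * lipSlope v x + |b| * lipSlope w x := by
  unfold lipSlope
  split_ifs with hx
  · simp
  have : (𝓝[≠] x).NeBot := ⟨hx⟩
  refine limsup_le_mul_limsup_add_mul_limsup (abs_nonneg a) (abs_nonneg b)
    (isCoboundedUnder_le_of_le _ fun y => div_nonneg (abs_nonneg _) dist_nonneg)
    (hv.isBoundedUnder_abs_sub_div_dist x _) (hw.isBoundedUnder_abs_sub_div_dist x _)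
    fun ε hε => ?_
  filter_upwards [(h.def hε).filter_mono nhdsWithin_le_nhds, self_mem_nhdsWithin]
    with y hy hyx
  have hd : 0 < dist y x := dist_pos.2 hyx
  rw [Real.norm_eq_abs, Real.norm_eq_abs, abs_of_pos hd] at hy
  have hu : |u y - u x| ≤ |a| * |v y - v x| + |b| * |w y - w x| + ε * dist y x := by
    have hlin : |a * (v y - v x) + b * (w y - w x)| ≤ |a| * |v y - v x| + |b| * |w y - w x| :=
      (abs_add_le _ _).trans_eq (by rw [abs_mul, abs_mul])
    linarith [abs_sub_abs_le_abs_sub (u y - u x) (a * (v y - v x) + b * (w y - w x))]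
  rw [div_le_iff₀ hd]
  calc |u y - u x| ≤ |a| * |v y - v x| + |b| * |w y - w x| + ε * dist y x := hu
    _ = _ := by field_simp

end Slope

section EuclideanPlane

lemma sq_add_sq_abs_le_of_quadratic_mem_Icc {a b c : ℝ}
    (h : ∀ u v : ℝ, a * u ^ 2 + 2 * b * u * v + c * v ^ 2 ∈ Set.Icc 0 (u ^ 2 + v ^ 2))
    (s₁ s₂ : ℝ) :
    (|a| * s₁ + |b| * s₂) ^ 2 + (|b| * s₁ + |c| * s₂) ^ 2 ≤ s₁ ^ 2 + s₂ ^ 2 := by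
  have ha : 0 ≤ a := by simpa using (h 1 0).1
  have hc : 0 ≤ c := by simpa using (h 0 1).1
  have hdet : |b| ^ 2 ≤ (1 - a) * (1 - c) := by
    have := discrim_le_zero (a := 1 - a) (b := -(2 * b)) (c := 1 - c) fun t => by
      nlinarith [(h t 1).2]
    rw [discrim] at this
    nlinarith [sq_abs b]
  -- Replacing `b` by `|b|` amounts to flipping the sign of `v`.
  have hq : 0 ≤ (1 - a) * s₁ ^ 2 - 2 * |b| * s₁ * s₂ + (1 - c) * s₂ ^ 2 := by
    rcases abs_choice b with hb | hb <;> rw [hb]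
    · linarith [(h s₁ s₂).2]
    · nlinarith [(h s₁ (-s₂)).2]
  -- Cayley–Hamilton for `A = [[a, |b|], [|b|, c]]`:
  -- `‖s‖² - ‖A s‖² = (a + c) ⟪(I - A) s, s⟫ + det (I - A) ‖s‖²`.
  rw [abs_of_nonneg ha, abs_of_nonneg hc]
  nlinarith [mul_nonneg (add_nonneg ha hc) hq,
    mul_nonneg (sub_nonneg.2 hdet) (add_nonneg (sq_nonneg s₁) (sq_nonneg s₂))]

lemma EuclideanSpace.map_eq_sum_smul_map_single {ι G 𝓕 : Type*} [Fintype ι] [DecidableEq ι]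
    [AddCommGroup G] [Module ℝ G] [FunLike 𝓕 (EuclideanSpace ℝ ι) G]
    [LinearMapClass 𝓕 ℝ (EuclideanSpace ℝ ι) G] (T : 𝓕) (z : EuclideanSpace ℝ ι) :
    T z = ∑ j, z j • T (EuclideanSpace.single j 1) := by
  conv_lhs => rw [← (EuclideanSpace.basisFun ι ℝ).sum_repr z]
  simp [map_sum, map_smul]

lemma sq_add_sq_abs_apply_single_le (T : EuclideanSpace ℝ (Fin 2) →L[ℝ] EuclideanSpace ℝ (Fin 2))
    (hsymm : (T : EuclideanSpace ℝ (Fin 2) →ₗ[ℝ] EuclideanSpace ℝ (Fin 2)).IsSymmetric)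
    (hT : ∀ z, inner ℝ (T z) z ∈ Set.Icc 0 (‖z‖ ^ 2)) (s₁ s₂ : ℝ) :
    (|T (EuclideanSpace.single 0 1) 0| * s₁ + |T (EuclideanSpace.single 1 1) 0| * s₂) ^ 2
      + (|T (EuclideanSpace.single 0 1) 1| * s₁ + |T (EuclideanSpace.single 1 1) 1| * s₂) ^ 2
      ≤ s₁ ^ 2 + s₂ ^ 2 := by
  have hb : T (EuclideanSpace.single 0 1) 1 = T (EuclideanSpace.single 1 1) 0 := by
    simpa [EuclideanSpace.inner_single_left, EuclideanSpace.inner_single_right] using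
      hsymm (EuclideanSpace.single 0 1) (EuclideanSpace.single 1 1)
  rw [hb]
  refine sq_add_sq_abs_le_of_quadratic_mem_Icc (fun u v => ?_) s₁ s₂
  convert hT !₂[u, v] using 2
  · simp [EuclideanSpace.real_norm_sq_eq]
  · rw [EuclideanSpace.map_eq_sum_smul_map_single T !₂[u, v]]
    simp [PiLp.inner_apply, Fin.sum_univ_two, hb]
    ring

lemma lipSlope_comp_le_of_hasFDerivAt {X : Type*} [MetricSpace X] {f₁ f₂ : X → ℝ}
    {K₁ K₂ : ℝ≥0} (hf₁ : LipschitzWith K₁ f₁) (hf₂ : LipschitzWith K₂ f₂)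
    {φ : EuclideanSpace ℝ (Fin 2) → ℝ} {φ' : EuclideanSpace ℝ (Fin 2) →L[ℝ] ℝ} {x : X}
    (hφ : HasFDerivAt φ φ' !₂[f₁ x, f₂ x]) :
    lipSlope (fun y => φ !₂[f₁ y, f₂ y]) x
      ≤ |φ' (EuclideanSpace.single 0 1)| * lipSlope f₁ x
        + |φ' (EuclideanSpace.single 1 1)| * lipSlope f₂ x := by
  have hf : (fun y => !₂[f₁ y, f₂ y] - !₂[f₁ x, f₂ x]) =O[𝓝 x] fun y => dist y x := by
    have hpi : (fun y => ![f₁ y, f₂ y] - ![f₁ x, f₂ x]) =O[𝓝 x] fun y => dist y x :=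
      isBigO_pi.2 <| Fin.forall_fin_two.2
        ⟨by simpa using hf₁.isBigO_sub_dist x _, by simpa using hf₂.isBigO_sub_dist x _⟩
    refine (((EuclideanSpace.equiv (Fin 2) ℝ).symm.isBigO_comp _ _).trans hpi).congr_left
      fun y => ?_
    ext i; fin_cases i <;> simp
  refine lipSlope_le_of_isLittleO hf₁ hf₂ <|
    (hφ.isLittleO_comp_sub_of_isBigO (f := fun y => !₂[f₁ y, f₂ y]) hf).congr_left fun y => ?_
  rw [EuclideanSpace.map_eq_sum_smul_map_single φ']
  simp [Fin.sum_univ_two]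
  ring

end EuclideanPlane

theorem slope_sq_sum_le_of_contraction_general {X : Type*} [MetricSpace X]
    (E : EuclideanSpace ℝ (Fin 2) → ℝ)
    (hE : ContDiff ℝ 2 E) (hconv : ConvexOn ℝ Set.univ E)
    (hlip : LipschitzWith 1 (gradient E))
    (f₁ f₂ : X → ℝ) (K : ℝ≥0)
    (hf₁ : LipschitzWith K f₁) (hf₂ : LipschitzWith K f₂)
    (g₁ g₂ : X → ℝ)
    (hg₁ : ∀ x, g₁ x = EuclideanSpace.equiv (Fin 2) ℝ
        ((fun v => v - gradient E v) ((EuclideanSpace.equiv (Fin 2) ℝ).symm ![f₁ x, f₂ x])) 0)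
    (hg₂ : ∀ x, g₂ x = EuclideanSpace.equiv (Fin 2) ℝ
        ((fun v => v - gradient E v) ((EuclideanSpace.equiv (Fin 2) ℝ).symm ![f₁ x, f₂ x])) 1)
    (x : X) :
    lipSlope g₁ x ^ 2 + lipSlope g₂ x ^ 2 ≤ lipSlope f₁ x ^ 2 + lipSlope f₂ x ^ 2 := by
  set p : EuclideanSpace ℝ (Fin 2) := !₂[f₁ x, f₂ x]
  set T := ContinuousLinearMap.id ℝ (EuclideanSpace ℝ (Fin 2)) - fderiv ℝ (gradient E) p
  have hgrad : Differentiable ℝ (gradient E) :=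
    (contDiff_gradient (n := 1) hE).differentiable one_ne_zero
  have hslope (g : X → ℝ) (i : Fin 2)
      (hg : ∀ y, g y = (!₂[f₁ y, f₂ y] - gradient E !₂[f₁ y, f₂ y]) i) :
      lipSlope g x ≤ |T (EuclideanSpace.single 0 1) i| * lipSlope f₁ x
        + |T (EuclideanSpace.single 1 1) i| * lipSlope f₂ x := by
    have hJ : HasFDerivAt (fun v => (v - gradient E v) i)
        ((EuclideanSpace.proj (𝕜 := ℝ) i).comp T) p :=
      (EuclideanSpace.proj (𝕜 := ℝ) i).hasFDerivAt.comp p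
        ((hasFDerivAt_id p).sub (hgrad p).hasFDerivAt)
    rw [funext hg]
    simpa only [ContinuousLinearMap.comp_apply, PiLp.proj_apply] using
      lipSlope_comp_le_of_hasFDerivAt hf₁ hf₂ hJ
  have hTsymm : (T : EuclideanSpace ℝ (Fin 2) →ₗ[ℝ] EuclideanSpace ℝ (Fin 2)).IsSymmetric := by
    simpa [T] using LinearMap.IsSymmetric.id.sub (isSymmetric_fderiv_gradient hE p)
  have h₁ := hslope g₁ 0 fun y => by simp [hg₁]
  have h₂ := hslope g₂ 1 fun y => by simp [hg₂]
  have hT := hconv.inner_id_sub_fderiv_gradient_self_mem_Icc (hE.differentiable two_ne_zero)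
    hlip (hgrad p)
  exact (add_le_add (pow_le_pow_left₀ (lipSlope_nonneg _ _) h₁ 2)
    (pow_le_pow_left₀ (lipSlope_nonneg _ _) h₂ 2)).trans
      (sq_add_sq_abs_apply_single_le T hTsymm hT _ _)

/-- If `E : ℝ² → ℝ` is `C²`, convex, with `1`-Lipschitz gradient, `J = Id − ∇E`, and
`f = (f₁,f₂)` is a bounded Lipschitz map, then `g = J ∘ f` satisfies
`|Dg₁|² + |Dg₂|² ≤ |Df₁|² + |Df₂|²` at every point. -/
theorem slope_sq_sum_le_of_contraction {X : Type*} [MetricSpace X]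
    (E : EuclideanSpace ℝ (Fin 2) → ℝ)
    (hE : ContDiff ℝ 2 E) (hconv : ConvexOn ℝ Set.univ E)
    (hlip : LipschitzWith 1 (gradient E))
    (f₁ f₂ : X → ℝ) (K : ℝ≥0)
    (hf₁ : LipschitzWith K f₁) (hf₂ : LipschitzWith K f₂)
    (hb : ∃ C : ℝ, ∀ x, |f₁ x| ≤ C ∧ |f₂ x| ≤ C)
    (g₁ g₂ : X → ℝ)
    (hg₁ : ∀ x, g₁ x = EuclideanSpace.equiv (Fin 2) ℝ
        ((fun v => v - gradient E v) ((EuclideanSpace.equiv (Fin 2) ℝ).symm ![f₁ x, f₂ x])) 0)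
    (hg₂ : ∀ x, g₂ x = EuclideanSpace.equiv (Fin 2) ℝ
        ((fun v => v - gradient E v) ((EuclideanSpace.equiv (Fin 2) ℝ).symm ![f₁ x, f₂ x])) 1)
    (x : X) :
    lipSlope g₁ x ^ 2 + lipSlope g₂ x ^ 2 ≤ lipSlope f₁ x ^ 2 + lipSlope f₂ x ^ 2 :=
  slope_sq_sum_le_of_contraction_general E hE hconv hlip f₁ f₂ K hf₁ hf₂ g₁ g₂ hg₁ hg₂ x
end

section
/- Let (Ω, B) be a measurable space, P a linear submarkovian operator on B_b(Ω) satisfying the Jensen inequality (Pf)² ≤ P(f²), and P* the adjoint acting on finite nonnegative measures via ∫ f d(P*μ) = ∫ Pf dμ. If for every C¹ curve ζ : [0,1] → B_b(Ω) with ∂_s ζ_s + ζ_s² ≤ 0 one has He₂²(μ₀,μ₁) ≥ ∫ ζ₁ dμ₁ − ∫ ζ₀ dμ₀ with equality in the supremum, then He₂(P*μ₀, P*μ₁) ≤ He₂(μ₀, μ₁) for all finite nonnegative measures μ₀, μ₁. -/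
open MeasureTheory
open scoped ENNReal

/-- A bounded measurable `C¹` subsolution of `∂_s ζ_s + ζ_s² ≤ 0` on `[0,1]`. -/
def IsHellingerSubsol {Ω : Type*} [MeasurableSpace Ω] (ζ : ℝ → Ω → ℝ) : Prop :=
  ∃ ζ' : ℝ → Ω → ℝ,
    (∀ x, ∀ t ∈ Set.Icc (0 : ℝ) 1, HasDerivAt (fun s => ζ s x) (ζ' t x) t) ∧
    (∀ x, ContinuousOn (fun t => ζ' t x) (Set.Icc (0 : ℝ) 1)) ∧
    (∀ x, ∀ t ∈ Set.Icc (0 : ℝ) 1, ζ' t x + (ζ t x) ^ 2 ≤ 0) ∧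
    (∀ t, Measurable (ζ t)) ∧ (∃ C : ℝ, ∀ t x, |ζ t x| ≤ C)

/-!
A subsolution `ζ` of `∂ₛζ + ζ² ≤ 0` stays below the exact solution `s ↦ a / (1 + s a)` started
at `a = ζ₀`, so `ζ₁ ≤ φ(ζ₀)` with `φ(a) = a / (1 + a)`. Since `φ` is concave and its tangent lines
have nonnegative intercept, positivity of `P` and `P 1 ≤ 1` give `P ζ₁ ≤ φ(P ζ₀)`. The exact
solution `η` started at `P ζ₀` is an admissible subsolution with `η₀ = P ζ₀` and
`η₁ = φ(P ζ₀) ≥ P ζ₁`, hence by duality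
`∫ ζ₁ d(P*μ₁) - ∫ ζ₀ d(P*μ₀) = ∫ P ζ₁ dμ₁ - ∫ P ζ₀ dμ₀ ≤ ∫ η₁ dμ₁ - ∫ η₀ dμ₀ ≤ He₂²(μ₀, μ₁)`.
-/

open Set

lemma monotoneOn_Icc_of_hasDerivAt_nonneg {f f' : ℝ → ℝ} {a b : ℝ}
    (hf : ∀ t ∈ Icc a b, HasDerivAt f (f' t) t) (hf' : ∀ t ∈ Icc a b, 0 ≤ f' t) :
    MonotoneOn f (Icc a b) :=
  monotoneOn_of_hasDerivWithinAt_nonneg (convex_Icc a b)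
    (fun t ht => (hf t ht).continuousAt.continuousWithinAt)
    (fun t ht => (hf t (interior_subset ht)).hasDerivWithinAt)
    (fun t ht => hf' t (interior_subset ht))

lemma one_add_pos_and_mul_le_of_inv_add_one_le {u v : ℝ} (huv : 0 < u * v)
    (h : u⁻¹ + 1 ≤ v⁻¹) : 0 < 1 + u ∧ v * (1 + u) ≤ u := by
  have hu : u ≠ 0 := left_ne_zero_of_mul huv.ne'
  have hv : v ≠ 0 := right_ne_zero_of_mul huv.ne'
  have key : v * (1 + u) ≤ u :=
    calc v * (1 + u) = u * v * (u⁻¹ + 1) := by field_simp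
      _ ≤ u * v * v⁻¹ := mul_le_mul_of_nonneg_left h huv.le
      _ = u := by field_simp
  refine ⟨?_, key⟩
  rcases hu.lt_or_gt with hu | hu
  · have hv : v < 0 := neg_of_mul_pos_right huv hu.le
    nlinarith
  · linarith

section Riccati

variable {f f' : ℝ → ℝ} {a b : ℝ}

lemma antitoneOn_of_riccati_subsol (hf : ∀ t ∈ Icc a b, HasDerivAt f (f' t) t)
    (hr : ∀ t ∈ Icc a b, f' t + f t ^ 2 ≤ 0) :
    AntitoneOn f (Icc a b) := by
  have h := monotoneOn_Icc_of_hasDerivAt_nonneg (fun t ht => (hf t ht).neg)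
    (fun t ht => by nlinarith [hr t ht, sq_nonneg (f t)])
  exact fun s hs t ht hst => neg_le_neg_iff.1 (h hs ht hst)

lemma inv_add_sub_le_inv_of_riccati_subsol (hf : ∀ t ∈ Icc a b, HasDerivAt f (f' t) t)
    (hr : ∀ t ∈ Icc a b, f' t + f t ^ 2 ≤ 0) (hne : ∀ t ∈ Icc a b, f t ≠ 0) (hab : a ≤ b) :
    (f a)⁻¹ + (b - a) ≤ (f b)⁻¹ := by
  have h := monotoneOn_Icc_of_hasDerivAt_nonneg
    (fun t ht => ((hf t ht).inv (hne t ht)).sub (hasDerivAt_id t)) fun t ht => by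
      have hpos : 0 < f t ^ 2 := by positivity [hne t ht]
      rw [sub_nonneg, le_div_iff₀ hpos]
      linarith [hr t ht]
  have := h (left_mem_Icc.2 hab) (right_mem_Icc.2 hab) hab
  simp only [Pi.sub_apply, Pi.inv_apply, id] at this
  linarith


/-- `f 0 / (1 + f 0)` is the value at time `1` of the exact solution `s ↦ a / (1 + s a)`
with `a = f 0`. -/
lemma one_add_pos_and_mul_le_of_riccati_subsol (hf : ∀ t ∈ Icc (0 : ℝ) 1, HasDerivAt f (f' t) t)
    (hr : ∀ t ∈ Icc (0 : ℝ) 1, f' t + f t ^ 2 ≤ 0) :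
    0 < 1 + f 0 ∧ f 1 * (1 + f 0) ≤ f 0 := by
  have hanti := antitoneOn_of_riccati_subsol hf hr
  have h0 : (0 : ℝ) ∈ Icc (0 : ℝ) 1 := left_mem_Icc.2 zero_le_one
  have h1 : (1 : ℝ) ∈ Icc (0 : ℝ) 1 := right_mem_Icc.2 zero_le_one
  have hinv := inv_add_sub_le_inv_of_riccati_subsol hf hr (a := 0) (b := 1)
  simp only [sub_zero] at hinv
  rcases lt_or_ge 0 (f 1) with hf1 | hf1
  · have hpos : ∀ t ∈ Icc (0 : ℝ) 1, 0 < f t := fun t ht => hf1.trans_le (hanti ht h1 ht.2)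
    exact one_add_pos_and_mul_le_of_inv_add_one_le (mul_pos (hpos 0 h0) hf1)
      (hinv (fun t ht => (hpos t ht).ne') zero_le_one)
  rcases lt_or_ge (f 0) 0 with hf0 | hf0
  · have hneg : ∀ t ∈ Icc (0 : ℝ) 1, f t < 0 := fun t ht => (hanti h0 ht ht.1).trans_lt hf0
    exact one_add_pos_and_mul_le_of_inv_add_one_le (mul_pos_of_neg_of_neg hf0 (hneg 1 h1))
      (hinv (fun t ht => (hneg t ht).ne) zero_le_one)
  · constructor <;> nlinarith

end Riccati

def IsSubMarkov {Ω : Type*} (L : (Ω → ℝ) →ₗ[ℝ] (Ω → ℝ)) : Prop :=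
  ∀ f : Ω → ℝ, (∀ x, 0 ≤ f x) → (∀ x, f x ≤ 1) → (∀ x, 0 ≤ L f x) ∧ (∀ x, L f x ≤ 1)

namespace IsSubMarkov

variable {Ω : Type*} {L : (Ω → ℝ) →ₗ[ℝ] (Ω → ℝ)} (hL : IsSubMarkov L)
include hL

lemma apply_nonneg {f : Ω → ℝ} {M : ℝ} (hf : ∀ y, 0 ≤ f y) (hM : ∀ y, f y ≤ M) (x : Ω) :
    0 ≤ L f x := by
  set M' := max M 1
  have hM' : 0 < M' := lt_max_of_lt_right one_pos
  have hscaled := hL (M'⁻¹ • f) (fun y => by simpa using mul_nonneg (inv_nonneg.2 hM'.le) (hf y))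
    fun y => by
      rw [Pi.smul_apply, smul_eq_mul, inv_mul_le_one₀ hM']
      exact (hM y).trans (le_max_left M 1)
  have : L f = M' • L (M'⁻¹ • f) := by rw [map_smul, smul_inv_smul₀ hM'.ne']
  rw [this, Pi.smul_apply, smul_eq_mul]
  exact mul_nonneg hM'.le (hscaled.1 x)

lemma apply_le_of_le_const {g : Ω → ℝ} {c m : ℝ} (hg : ∀ y, g y ≤ c) (hc : 0 ≤ c)
    (hm : ∀ y, m ≤ g y) (x : Ω) : L g x ≤ c := by
  have hdiff := hL.apply_nonneg (f := c • 1 - g) (M := c - m) (fun y => by simp [hg y])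
    (fun y => by simp; linarith [hm y]) x
  have hone := (hL 1 (fun _ => zero_le_one) fun _ => le_rfl).2 x
  rw [map_sub, map_smul] at hdiff
  simp only [Pi.sub_apply, Pi.smul_apply, smul_eq_mul, sub_nonneg] at hdiff
  nlinarith

lemma apply_le_affine {f g : Ω → ℝ} {a b m : ℝ} (hg : ∀ y, g y ≤ a + b * f y) (ha : 0 ≤ a)
    (hm : ∀ y, m ≤ g y - b * f y) (x : Ω) : L g x ≤ a + b * L f x := by
  have := hL.apply_le_of_le_const (g := g - b • f) (fun y => by simp; linarith [hg y]) ha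
    (fun y => by simpa using hm y) x
  rw [map_sub, map_smul] at this
  simp only [Pi.sub_apply, Pi.smul_apply, smul_eq_mul] at this
  linarith

lemma neg_le_apply {f : Ω → ℝ} {c M : ℝ} (hf : ∀ y, -c ≤ f y) (hc : 0 ≤ c) (hM : ∀ y, f y ≤ M)
    (x : Ω) : -c ≤ L f x := by
  have := hL.apply_le_of_le_const (g := -f) (m := -M) (fun y => by simp; linarith [hf y]) hc
    (fun y => by simp; linarith [hM y]) x
  rw [map_neg, Pi.neg_apply] at this
  linarith

end IsSubMarkov

/-- The tangent line at `t` of the concave function `a ↦ a / (1 + a)`. -/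
lemma div_one_add_le_tangent {a t : ℝ} (ha : 0 < 1 + a) (ht : 0 < 1 + t) :
    a / (1 + a) ≤ (t / (1 + t)) ^ 2 + ((1 + t) ^ 2)⁻¹ * a := by
  have hrhs : (t / (1 + t)) ^ 2 + ((1 + t) ^ 2)⁻¹ * a = (t ^ 2 + a) / (1 + t) ^ 2 := by
    rw [div_pow, inv_mul_eq_div, ← add_div]
  rw [hrhs, div_le_div_iff₀ ha (by positivity)]
  nlinarith [sq_nonneg (t - a)]

lemma hasDerivAt_div_one_add_mul (a t : ℝ) (h : 1 + t * a ≠ 0) :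
    HasDerivAt (fun s => a / (1 + s * a)) (-(a / (1 + t * a)) ^ 2) t := by
  have hden : HasDerivAt (fun s => 1 + s * a) a t := by
    simpa using ((hasDerivAt_id t).mul_const a).const_add 1
  exact ((hasDerivAt_const t a).fun_div hden h).congr_deriv (by rw [div_pow]; ring)

lemma exists_pos_forall_le_one_add_mul {c : ℝ} (hc0 : 0 ≤ c) (hc1 : c < 1) (B : ℝ) :
    ∃ ρ > 0, ∀ s ∈ Icc (-ρ) (1 + ρ), ∀ a ∈ Icc (-c) B, (1 - c) / 2 ≤ 1 + s * a := by
  set B' := max B 0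
  have hB' : 0 ≤ B' := le_max_right B 0
  refine ⟨(1 - c) / (2 * (B' + 1)), by apply div_pos <;> linarith, ?_⟩
  set ρ := (1 - c) / (2 * (B' + 1))
  have hρ : 0 ≤ ρ := by positivity
  have hρB : ρ * B' ≤ (1 - c) / 2 := by
    rw [div_mul_eq_mul_div, div_le_div_iff₀ (by positivity) two_pos]
    nlinarith
  have hρ1 : ρ ≤ (1 - c) / 2 := by
    rw [div_le_div_iff₀ (by positivity) two_pos]
    nlinarith
  rintro s ⟨hs0, hs1⟩ a ⟨ha0, ha1⟩
  rcases le_or_gt 0 a with ha | ha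
  · have : a ≤ B' := ha1.trans (le_max_left B 0)
    nlinarith [mul_nonneg (by linarith : 0 ≤ s + ρ) ha, mul_le_mul_of_nonneg_left this hρ]
  · nlinarith [mul_nonneg (by linarith : 0 ≤ 1 + ρ - s) (by linarith : 0 ≤ -a),
      mul_le_mul_of_nonneg_left hρ1 hc0]

section Subsolution

variable {Ω : Type*} [MeasurableSpace Ω]

/-- `η s = A / (1 + s A)`, with `s` clamped to a neighbourhood of `[0,1]` on which the
denominator stays positive. -/
lemma exists_isHellingerSubsol_of_bounds {A : Ω → ℝ} {c B : ℝ} (hA : Measurable A)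
    (hc0 : 0 ≤ c) (hc1 : c < 1) (hcA : ∀ x, -c ≤ A x) (hAB : ∀ x, A x ≤ B) :
    ∃ η : ℝ → Ω → ℝ, IsHellingerSubsol η ∧ η 0 = A ∧ ∀ x, η 1 x = A x / (1 + A x) := by
  obtain ⟨ρ, hρ, hden⟩ := exists_pos_forall_le_one_add_mul hc0 hc1 B
  have hρ' : -ρ ≤ 1 + ρ := by linarith
  set cl : ℝ → ℝ := fun s => projIcc (-ρ) (1 + ρ) hρ' s
  have hcl_eq : ∀ s ∈ Icc (-ρ) (1 + ρ), cl s = s := fun s hs => by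
    simp only [cl, projIcc_of_mem hρ' hs]
  have hcl0 : cl 0 = 0 := hcl_eq 0 ⟨by linarith, by linarith⟩
  have hcl1 : cl 1 = 1 := hcl_eq 1 ⟨by linarith, by linarith⟩
  have hcl_cont : Continuous cl := continuous_subtype_val.comp continuous_projIcc
  have hd : ∀ s x, (1 - c) / 2 ≤ 1 + cl s * A x := fun s x =>
    hden _ (projIcc (-ρ) (1 + ρ) hρ' s).2 _ ⟨hcA x, hAB x⟩
  have hd_pos : ∀ s x, 0 < 1 + cl s * A x := fun s x => lt_of_lt_of_le (by linarith) (hd s x)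
  set η : ℝ → Ω → ℝ := fun s x => A x / (1 + cl s * A x)
  refine ⟨η, ⟨fun t x => -(η t x) ^ 2, ?_, ?_, fun x t _ => by simp, ?_, ?_⟩, ?_, ?_⟩
  · intro x t ht
    have hclt : cl t = t := hcl_eq t ⟨by linarith [ht.1], by linarith [ht.2]⟩
    have hnhds : Icc (-ρ) (1 + ρ) ∈ nhds t :=
      Icc_mem_nhds (by linarith [ht.1]) (by linarith [ht.2])
    have hderiv : HasDerivAt (fun s => A x / (1 + s * A x)) (-(η t x) ^ 2) t := by
      simpa only [η, hclt] using hasDerivAt_div_one_add_mul (A x) t (hclt ▸ (hd_pos t x).ne')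
    refine hderiv.congr_of_eventuallyEq ?_
    filter_upwards [hnhds] with s hs
    simp only [η, hcl_eq s hs]
  · intro x
    exact ((continuous_const.div (continuous_const.add (hcl_cont.mul continuous_const))
      fun t => (hd_pos t x).ne').pow 2).neg.continuousOn
  · exact fun t => hA.div (measurable_const.add (measurable_const.mul hA))
  · refine ⟨max B c / ((1 - c) / 2), fun t x => ?_⟩
    rw [abs_div, abs_of_pos (hd_pos t x)]
    exact div_le_div₀ (le_max_of_le_right hc0) (abs_le.2 ⟨by linarith [hcA x, le_max_right B c],
      (hAB x).trans (le_max_left B c)⟩) (by linarith) (hd t x)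
  · funext x
    simp [η, hcl0]
  · intro x
    simp [η, hcl1]

namespace IsHellingerSubsol

variable {ζ : ℝ → Ω → ℝ} (hζ : IsHellingerSubsol ζ)
include hζ

lemma measurable (t : ℝ) : Measurable (ζ t) := by
  obtain ⟨-, -, -, -, hm, -⟩ := hζ
  exact hm t

lemma exists_abs_le : ∃ C, ∀ t x, |ζ t x| ≤ C := by
  obtain ⟨-, -, -, -, -, hC⟩ := hζ
  exact hC

lemma one_add_pos_and_mul_le (x : Ω) : 0 < 1 + ζ 0 x ∧ ζ 1 x * (1 + ζ 0 x) ≤ ζ 0 x := by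
  obtain ⟨ζ', hd, -, hr, -⟩ := hζ
  exact one_add_pos_and_mul_le_of_riccati_subsol (hd x) (hr x)

lemma exists_lt_one_neg_le : ∃ c, 0 ≤ c ∧ c < 1 ∧ ∀ x, -c ≤ ζ 0 x := by
  obtain ⟨C, hC⟩ := hζ.exists_abs_le
  set C' := max C 0
  have hC' : 0 ≤ C' := le_max_right C 0
  refine ⟨C' / (1 + C'), by positivity, (div_lt_one (by positivity)).2 (by linarith), fun x => ?_⟩
  obtain ⟨hpos, hle⟩ := hζ.one_add_pos_and_mul_le x
  have h1 : -C' ≤ ζ 1 x := by linarith [(abs_le.1 (hC 1 x)).1, le_max_left C 0]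
  rw [neg_le, le_div_iff₀ (by positivity)]
  nlinarith

/-- Jensen's inequality for the concave map `a ↦ a / (1 + a)`, applied to the endpoint bound
`ζ₁ ≤ ζ₀ / (1 + ζ₀)`; the tangent lines have nonnegative intercept, which absorbs `L 1 ≤ 1`. -/
lemma apply_one_le {L : (Ω → ℝ) →ₗ[ℝ] (Ω → ℝ)} (hL : IsSubMarkov L) {x : Ω}
    (hx : -1 < L (ζ 0) x) : L (ζ 1) x ≤ L (ζ 0) x / (1 + L (ζ 0) x) := by
  obtain ⟨C, hC⟩ := hζ.exists_abs_le
  set t := L (ζ 0) x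
  have ht : 0 < 1 + t := by linarith
  have hslope : 0 ≤ ((1 + t) ^ 2)⁻¹ := by positivity
  have htangent : ∀ y, ζ 1 y ≤ (t / (1 + t)) ^ 2 + ((1 + t) ^ 2)⁻¹ * ζ 0 y := fun y => by
    obtain ⟨hpos, hle⟩ := hζ.one_add_pos_and_mul_le y
    calc ζ 1 y ≤ ζ 0 y / (1 + ζ 0 y) := (le_div_iff₀ hpos).2 hle
      _ ≤ _ := div_one_add_le_tangent hpos ht
  have hbdd : ∀ y, -C - ((1 + t) ^ 2)⁻¹ * C ≤ ζ 1 y - ((1 + t) ^ 2)⁻¹ * ζ 0 y := fun y => by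
    nlinarith [(abs_le.1 (hC 1 y)).1, mul_le_mul_of_nonneg_left (abs_le.1 (hC 0 y)).2 hslope]
  calc L (ζ 1) x ≤ (t / (1 + t)) ^ 2 + ((1 + t) ^ 2)⁻¹ * t :=
        hL.apply_le_affine htangent (by positivity) hbdd x
    _ = t / (1 + t) := by field_simp; ring

end IsHellingerSubsol

end Subsolution

theorem hellinger_contraction_submarkov_general {Ω : Type*} [MeasurableSpace Ω]
    (P : (Ω → ℝ) → (Ω → ℝ))
    (hadd : ∀ f g : Ω → ℝ, P (f + g) = P f + P g)
    (hsmul : ∀ (c : ℝ) (f : Ω → ℝ), P (c • f) = c • P f)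
    (hsub : ∀ f : Ω → ℝ, (∀ x, 0 ≤ f x) → (∀ x, f x ≤ 1) →
        (∀ x, 0 ≤ P f x) ∧ (∀ x, P f x ≤ 1))
    (hmeas : ∀ f : Ω → ℝ, Measurable f → (∃ C : ℝ, ∀ x, |f x| ≤ C) →
        Measurable (P f) ∧ ∃ C : ℝ, ∀ x, |P f x| ≤ C)
    (Pstar : Measure Ω → Measure Ω)
    (hPstarFin : ∀ μ : Measure Ω, IsFiniteMeasure μ → IsFiniteMeasure (Pstar μ))
    (hadj : ∀ (μ : Measure Ω), IsFiniteMeasure μ →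
        ∀ f : Ω → ℝ, Measurable f → (∃ C : ℝ, ∀ x, |f x| ≤ C) →
        ∫ x, f x ∂(Pstar μ) = ∫ x, P f x ∂μ)
    (He2sq : Measure Ω → Measure Ω → ℝ≥0∞)
    (hdual : ∀ (μ₀ μ₁ : Measure Ω), IsFiniteMeasure μ₀ → IsFiniteMeasure μ₁ →
        He2sq μ₀ μ₁ = ⨆ ζ ∈ {ζ : ℝ → Ω → ℝ | IsHellingerSubsol ζ},
          ENNReal.ofReal (∫ x, ζ 1 x ∂μ₁ - ∫ x, ζ 0 x ∂μ₀))
    (μ₀ μ₁ : Measure Ω) (hμ₀ : IsFiniteMeasure μ₀) (hμ₁ : IsFiniteMeasure μ₁) :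
    He2sq (Pstar μ₀) (Pstar μ₁) ≤ He2sq μ₀ μ₁ := by
  have hP : IsSubMarkov (IsLinearMap.mk' P ⟨hadd, hsmul⟩) := hsub
  rw [hdual _ _ (hPstarFin μ₀ hμ₀) (hPstarFin μ₁ hμ₁), hdual μ₀ μ₁ hμ₀ hμ₁]
  refine iSup₂_le fun ζ (hζ : IsHellingerSubsol ζ) => ?_
  obtain ⟨C, hC⟩ := hζ.exists_abs_le
  obtain ⟨c, hc0, hc1, hζc⟩ := hζ.exists_lt_one_neg_le
  obtain ⟨hAm, B, hB⟩ := hmeas (ζ 0) (hζ.measurable 0) ⟨C, hC 0⟩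
  have hAc (x : Ω) : -c ≤ P (ζ 0) x :=
    hP.neg_le_apply hζc hc0 (fun y => (le_abs_self _).trans (hC 0 y)) x
  obtain ⟨η, hη, hη0, hη1⟩ := exists_isHellingerSubsol_of_bounds hAm hc0 hc1 hAc
    fun x => (le_abs_self _).trans (hB x)
  refine le_trans (ENNReal.ofReal_le_ofReal ?_) (le_iSup₂_of_le η hη le_rfl)
  rw [hadj μ₁ hμ₁ (ζ 1) (hζ.measurable 1) ⟨C, hC 1⟩,
    hadj μ₀ hμ₀ (ζ 0) (hζ.measurable 0) ⟨C, hC 0⟩, hη0]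
  obtain ⟨hPm, C₁, hC₁⟩ := hmeas (ζ 1) (hζ.measurable 1) ⟨C, hC 1⟩
  obtain ⟨Cη, hCη⟩ := hη.exists_abs_le
  have hPζ₁_int : Integrable (P (ζ 1)) μ₁ :=
    .of_bound hPm.aestronglyMeasurable C₁ (.of_forall hC₁)
  have hη₁_int : Integrable (η 1) μ₁ :=
    .of_bound (hη.measurable 1).aestronglyMeasurable Cη (.of_forall (hCη 1))
  refine sub_le_sub_right (integral_mono hPζ₁_int hη₁_int fun x => ?_) _
  rw [hη1 x]
  exact hζ.apply_one_le hP ((neg_lt_neg hc1).trans_le (hAc x))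

/-- Hellinger contraction for a linear submarkovian operator `P` satisfying Jensen's
inequality, via the dynamic dual formulation of `He₂²`: if `He₂²` coincides with the
supremum of `∫ζ₁dμ₁ − ∫ζ₀dμ₀` over `C¹` subsolutions of `∂_sζ + ζ² ≤ 0`, then
`He₂(P*μ₀,P*μ₁) ≤ He₂(μ₀,μ₁)`. -/
theorem hellinger_contraction_submarkov {Ω : Type*} [MeasurableSpace Ω]
    (P : (Ω → ℝ) → (Ω → ℝ))
    (hadd : ∀ f g : Ω → ℝ, P (f + g) = P f + P g)
    (hsmul : ∀ (c : ℝ) (f : Ω → ℝ), P (c • f) = c • P f)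
    (hsub : ∀ f : Ω → ℝ, (∀ x, 0 ≤ f x) → (∀ x, f x ≤ 1) →
        (∀ x, 0 ≤ P f x) ∧ (∀ x, P f x ≤ 1))
    (hmeas : ∀ f : Ω → ℝ, Measurable f → (∃ C : ℝ, ∀ x, |f x| ≤ C) →
        Measurable (P f) ∧ ∃ C : ℝ, ∀ x, |P f x| ≤ C)
    (hjensen : ∀ f : Ω → ℝ, Measurable f → (∃ C : ℝ, ∀ x, |f x| ≤ C) →
        ∀ x, (P f x) ^ 2 ≤ P (fun y => f y ^ 2) x)
    (Pstar : Measure Ω → Measure Ω)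
    (hPstarFin : ∀ μ : Measure Ω, IsFiniteMeasure μ → IsFiniteMeasure (Pstar μ))
    (hadj : ∀ (μ : Measure Ω), IsFiniteMeasure μ →
        ∀ f : Ω → ℝ, Measurable f → (∃ C : ℝ, ∀ x, |f x| ≤ C) →
        ∫ x, f x ∂(Pstar μ) = ∫ x, P f x ∂μ)
    (He2sq : Measure Ω → Measure Ω → ℝ≥0∞)
    (hdual : ∀ (μ₀ μ₁ : Measure Ω), IsFiniteMeasure μ₀ → IsFiniteMeasure μ₁ →
        He2sq μ₀ μ₁ = ⨆ ζ ∈ {ζ : ℝ → Ω → ℝ | IsHellingerSubsol ζ},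
          ENNReal.ofReal (∫ x, ζ 1 x ∂μ₁ - ∫ x, ζ 0 x ∂μ₀))
    (μ₀ μ₁ : Measure Ω) (hμ₀ : IsFiniteMeasure μ₀) (hμ₁ : IsFiniteMeasure μ₁) :
    He2sq (Pstar μ₀) (Pstar μ₁) ≤ He2sq μ₀ μ₁ :=
  hellinger_contraction_submarkov_general P hadd hsmul hsub hmeas Pstar hPstarFin hadj He2sq hdual
    μ₀ μ₁ hμ₀ hμ₁
end
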